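/- arXiv:2202.06810 — 7 statements merged into one kernel-verified Lean document; each statement's English description precedes it below -/
import Mathlib

section
/- Let n ≥ 1 and let 𝓕 be an arbitrary set of simple graphs on the vertex set Fin n. Suppose 𝓐 is a finite family of simple graphs on Fin n such that for any two distinct members G, G' ∈ 𝓐 the symmetric difference G ⊕ G' belongs to 𝓕, and 𝓑 is a finite family of simple graphs on Fin n such that for any two distinct members G, G' ∈ 𝓑 the symmetric difference G ⊕ G' does not belong to 𝓕. Then |𝓐| · |𝓑| ≤ 2^(n(n-1)/2). -/
open SimpleGraph Filter

/-- The symmetric difference of two simple graphs on the same vertex set: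
two vertices are adjacent iff they are adjacent in exactly one of the graphs. -/
def symmDiffG {V : Type*} (G G' : SimpleGraph V) : SimpleGraph V where
  Adj u v := (G.Adj u v ∧ ¬ G'.Adj u v) ∨ (G'.Adj u v ∧ ¬ G.Adj u v)
  symm := by
    constructor
    intro u v h
    rcases h with ⟨h1, h2⟩ | ⟨h1, h2⟩
    · exact Or.inl ⟨h1.symm, fun h => h2 h.symm⟩
    · exact Or.inr ⟨h1.symm, fun h => h2 h.symm⟩
  loopless := by
    constructor
    intro u h
    rcases h with ⟨h1, _⟩ | ⟨h1, _⟩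
    · exact G.irrefl h1
    · exact G'.irrefl h1

lemma symmDiffG_adj {V : Type*} (G G' : SimpleGraph V) (u v : V) :
    (symmDiffG G G').Adj u v ↔
      ((G.Adj u v ∧ ¬ G'.Adj u v) ∨ (G'.Adj u v ∧ ¬ G.Adj u v)) := Iff.rfl

lemma symmDiffG_swap {V : Type*} {G H G' H' : SimpleGraph V}
    (h : symmDiffG G H = symmDiffG G' H') : symmDiffG G G' = symmDiffG H H' := by
  ext u v
  have := congrFun (congrFun (congrArg SimpleGraph.Adj h) u) v
  simp only [symmDiffG_adj, eq_iff_iff] at this ⊢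
  tauto

lemma symmDiffG_self_eq {V : Type*} {G H H' : SimpleGraph V}
    (h : symmDiffG G G = symmDiffG H H') : H = H' := by
  ext u v
  have := congrFun (congrFun (congrArg SimpleGraph.Adj h) u) v
  simp only [symmDiffG_adj, eq_iff_iff] at this
  constructor
  · intro hv; by_contra hv'; exact (this.mpr (Or.inl ⟨hv, hv'⟩)).elim (fun p => p.2 p.1) (fun p => p.2 p.1)
  · intro hv; by_contra hv'; exact (this.mpr (Or.inr ⟨hv, hv'⟩)).elim (fun p => p.2 p.1) (fun p => p.2 p.1)

lemma card_simpleGraph_le (n : ℕ) :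
    Fintype.card (SimpleGraph (Fin n)) ≤ 2 ^ (n.choose 2) := by
  have h : Function.Injective
      (fun (G : SimpleGraph (Fin n)) (e : { e : Sym2 (Fin n) // ¬ e.IsDiag }) =>
        (e.1 ∈ G.edgeSet : Prop)) := by
    intro G G' h
    apply SimpleGraph.edgeSet_injective
    ext e
    by_cases hd : e.IsDiag
    · constructor
      · intro he; exact absurd hd (G.not_isDiag_of_mem_edgeSet he)
      · intro he; exact absurd hd (G'.not_isDiag_of_mem_edgeSet he)
    · exact iff_of_eq (congrFun h ⟨e, hd⟩)
  calc Fintype.card (SimpleGraph (Fin n))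
      ≤ Fintype.card ({ e : Sym2 (Fin n) // ¬ e.IsDiag } → Prop) :=
        Fintype.card_le_of_injective _ h
    _ = 2 ^ (n.choose 2) := by
        rw [Fintype.card_fun, Fintype.card_prop, Sym2.card_subtype_not_diag,
          Fintype.card_fin]

theorem stmt_0 (n : ℕ) (hn : 1 ≤ n) (F : Set (SimpleGraph (Fin n)))
    (A B : Finset (SimpleGraph (Fin n)))
    (hA : ∀ G ∈ A, ∀ G' ∈ A, G ≠ G' → symmDiffG G G' ∈ F)
    (hB : ∀ G ∈ B, ∀ G' ∈ B, G ≠ G' → symmDiffG G G' ∉ F) :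
    A.card * B.card ≤ 2 ^ (n * (n - 1) / 2) := by
  have hinj : Set.InjOn (fun p : SimpleGraph (Fin n) × SimpleGraph (Fin n) =>
      symmDiffG p.1 p.2) (A ×ˢ B : Finset _) := by
    intro p hp q hq hfq
    simp only [Finset.coe_product, Set.mem_prod, Finset.mem_coe] at hp hq
    have hsw : symmDiffG p.1 q.1 = symmDiffG p.2 q.2 := symmDiffG_swap hfq
    by_cases h1 : p.1 = q.1
    · have h2 : p.2 = q.2 := symmDiffG_self_eq (h1 ▸ hsw)
      exact Prod.ext h1 h2
    · exfalso
      have hmem : symmDiffG p.1 q.1 ∈ F := hA _ hp.1 _ hq.1 h1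
      have h2 : p.2 ≠ q.2 := by
        intro h2
        exact h1 (symmDiffG_self_eq (h2 ▸ hsw).symm)
      exact hB _ hp.2 _ hq.2 h2 (hsw ▸ hmem)
  have := Finset.card_le_card_of_injOn _ (fun p _ => Finset.mem_univ _) hinj
  rw [Finset.card_product] at this
  calc A.card * B.card ≤ (Finset.univ : Finset (SimpleGraph (Fin n))).card := this
    _ = Fintype.card (SimpleGraph (Fin n)) := Finset.card_univ
    _ ≤ 2 ^ (n.choose 2) := card_simpleGraph_le n
    _ = 2 ^ (n * (n - 1) / 2) := by rw [Nat.choose_two_right]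
end

section
/- Let k ≥ 2 and n = 2^k − 1. The maximum cardinality of a nonempty family 𝓖 of simple graphs on the vertex set Fin n that is closed under symmetric difference (if G, G' ∈ 𝓖 then G ⊕ G' ∈ 𝓖) and such that for any two distinct members G, G' ∈ 𝓖 the symmetric difference G ⊕ G' is 3-connected equals 2^(n−k−1); that is, there exists such a family of cardinality 2^(n−k−1), and every such family has cardinality at most 2^(n−k−1). -/
open SimpleGraph Filter

/-- A graph on a finite vertex set `V` is 3-connected if `|V| ≥ 4` and for every
subset `S ⊆ V` with `|S| ≤ 2` the subgraph induced on `V \ S` is connected. -/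
def IsThreeConnected {V : Type*} [Fintype V] (G : SimpleGraph V) : Prop :=
  4 ≤ Fintype.card V ∧ ∀ S : Set V, S.ncard ≤ 2 → (G.induce Sᶜ).Connected

/-- cut graph of a 0/1 vector -/
def gOf {n : ℕ} (w : Fin n → ZMod 2) : SimpleGraph (Fin n) where
  Adj u v := w u ≠ w v
  symm := ⟨fun _ _ h => Ne.symm h⟩
  loopless := ⟨fun _ h => h rfl⟩

lemma gOf_adj {n : ℕ} (w : Fin n → ZMod 2) (u v : Fin n) : (gOf w).Adj u v ↔ w u ≠ w v := Iff.rfl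

lemma zmod2_cases : ∀ a : ZMod 2, a = 0 ∨ a = 1 := by decide

lemma symmDiffG_gOf {n : ℕ} (w w' : Fin n → ZMod 2) :
    symmDiffG (gOf w) (gOf w') = gOf (w + w') := by
  ext u v
  have key : ∀ a b c d : ZMod 2,
      ((a ≠ b ∧ ¬ c ≠ d) ∨ (c ≠ d ∧ ¬ a ≠ b)) ↔ a + c ≠ b + d := by decide
  simpa [symmDiffG, gOf] using key (w u) (w v) (w' u) (w' v)

/-- helper: find element satisfying p outside a small set S -/
lemma exists_notin {n : ℕ} (p : Fin n → Prop) [DecidablePred p]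
    (hp : 3 ≤ (Finset.univ.filter p).card) (S : Set (Fin n)) (hS : S.ncard ≤ 2) :
    ∃ z, p z ∧ z ∉ S := by
  by_contra h
  push_neg at h
  have hsub : (Finset.univ.filter p : Set (Fin n)) ⊆ S := by
    intro x hx
    simp only [Finset.coe_filter, Finset.mem_univ, Set.mem_setOf_eq, true_and] at hx
    exact h x hx
  have := Set.ncard_le_ncard hsub (Set.toFinite S)
  rw [Set.ncard_coe_finset] at this
  omega

lemma gOf_threeConnected {n : ℕ} (w : Fin n → ZMod 2)
    (hA : 3 ≤ (Finset.univ.filter (fun i => w i = 1)).card)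
    (hB : 3 ≤ (Finset.univ.filter (fun i => w i = 0)).card) :
    IsThreeConnected (gOf w) := by
  constructor
  · have := Finset.card_filter_add_card_filter_not (s := (Finset.univ : Finset (Fin n)))
      (p := fun i => w i = 1)
    have h01 : ∀ a : ZMod 2, ¬ a = 1 ↔ a = 0 := by decide
    simp only [Fintype.card_fin]
    have heq : (Finset.univ.filter (fun i => ¬ w i = 1)).card
        = (Finset.univ.filter (fun i => w i = 0)).card := by
      congr 1; apply Finset.filter_congr; intro i _; simp [h01]
    have hbn : (Finset.univ : Finset (Fin n)).card = n := by simp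
    omega
  · intro S hS
    obtain ⟨a, ha1, haS⟩ := exists_notin (fun i => w i = 1) hA S hS
    obtain ⟨b, hb0, hbS⟩ := exists_notin (fun i => w i = 0) hB S hS
    have hadj : ∀ (x y : Fin n) (hx : x ∈ Sᶜ) (hy : y ∈ Sᶜ), w x ≠ w y →
        ((gOf w).induce Sᶜ).Adj ⟨x, hx⟩ ⟨y, hy⟩ := by
      intro x y hx hy hxy
      exact hxy
    rw [SimpleGraph.connected_iff]
    constructor
    · rintro ⟨x, hx⟩ ⟨y, hy⟩
      rcases eq_or_ne (w x) (w y) with hxy | hxy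
      · rcases eq_or_ne x y with rfl | hne
        · rfl
        rcases zmod2_cases (w x) with h0 | h1
        · -- both 0, go through a
          have h1 : w x ≠ w a := by rw [h0, ha1]; decide
          have h2 : w a ≠ w y := by rw [ha1, ← hxy, h0]; decide
          exact ((hadj x a hx haS h1).reachable).trans (hadj a y haS hy h2).reachable
        · have h1' : w x ≠ w b := by rw [h1, hb0]; decide
          have h2' : w b ≠ w y := by rw [hb0, ← hxy, h1]; decide
          exact ((hadj x b hx hbS h1').reachable).trans (hadj b y hbS hy h2').reachable
      · exact (hadj x y hx hy hxy).reachable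
    · exact ⟨⟨a, haS⟩⟩

lemma pi_add_eq_zero {α : Type*} {f g : α → ZMod 2} (h : f + g = 0) : f = g := by
  funext i
  have := congrFun h i
  have key : ∀ a b : ZMod 2, a + b = 0 → a = b := by decide
  exact key _ _ this


section hammingcode

variable {n k : ℕ}

abbrev Vk (k : ℕ) := Fin k → ZMod 2

def chi (e : Fin n ≃ {x : Vk k // x ≠ 0}) (i0 : Fin n) :
    (Fin n → ZMod 2) →+ (Vk k × ZMod 2) where
  toFun w := (∑ i, w i • (e i).val, w i0)
  map_zero' := by simp
  map_add' := by
    intro w w'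
    ext j
    · simp [add_smul, Finset.sum_add_distrib]
    · simp

lemma chi_single (e : Fin n ≃ {x : Vk k // x ≠ 0}) (i0 : Fin n) (j : Fin n) (b : ZMod 2) :
    chi e i0 (fun i => if i = j then b else 0)
      = (b • (e j).val, if i0 = j then b else 0) := by
  simp only [chi, AddMonoidHom.coe_mk, ZeroHom.coe_mk]
  congr 1
  · rw [Finset.sum_congr rfl (fun i _ => ?_), Finset.sum_ite_eq' Finset.univ j
      (fun i => b • (e i).val)]
    · simp
    · by_cases h : i = j <;> simp [h]

lemma chi_surj (e : Fin n ≃ {x : Vk k // x ≠ 0}) (i0 : Fin n) (hk : 2 ≤ k) :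
    Function.Surjective (chi e i0) := by
  have hchar : ∀ a : ZMod 2, a + a = 0 := by decide
  -- the range is an AddSubgroup; show it contains generators
  set R := (chi e i0).range with hR
  have single_mem : ∀ (j : Fin n) (b : ZMod 2), (b • (e j).val, if i0 = j then b else 0) ∈ R := by
    intro j b
    exact ⟨fun i => if i = j then b else 0, chi_single e i0 j b⟩
  have hA : ∀ x : Vk k, x ≠ 0 → x ≠ (e i0).val → (x, (0 : ZMod 2)) ∈ R := by
    intro x hx hxv
    have := single_mem (e.symm ⟨x, hx⟩) 1
    rw [if_neg, one_smul] at this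
    · simpa using this
    · intro h
      apply hxv
      rw [h]
      simp
  have hB : ((e i0).val, (1 : ZMod 2)) ∈ R := by
    have := single_mem i0 1
    rw [if_pos rfl, one_smul] at this
    exact this
  have hC : ((e i0).val, (0 : ZMod 2)) ∈ R := by
    -- write v0 = z + (v0 + z) with z ∉ {0, v0}
    have hcard : 3 ≤ Fintype.card (Vk k) := by
      have : Fintype.card (Vk k) = 2 ^ k := by simp [Vk]
      have : 2 ^ 2 ≤ 2 ^ k := Nat.pow_le_pow_right (by norm_num) hk
      omega
    have hsub : ({(0 : Vk k), (e i0).val} : Finset (Vk k)) ⊆ Finset.univ :=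
      Finset.subset_univ _
    have hle : ({(0 : Vk k), (e i0).val} : Finset (Vk k)).card ≤ 2 :=
      Finset.card_insert_le _ _ |>.trans (by simp)
    have hpos : 0 < (Finset.univ \ ({(0 : Vk k), (e i0).val} : Finset (Vk k))).card := by
      rw [Finset.card_sdiff_of_subset hsub]
      have : Fintype.card (Vk k) = Finset.univ.card (α := Vk k) := rfl
      omega
    obtain ⟨z, hz⟩ := Finset.card_pos.mp hpos
    rw [Finset.mem_sdiff, Finset.mem_insert, Finset.mem_singleton] at hz
    push_neg at hz
    obtain ⟨-, hz1, hz2⟩ := hz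
    have hz1' : z ≠ 0 := hz1
    have hvz : (e i0).val + z ≠ 0 := fun h => hz2 (pi_add_eq_zero h).symm
    have hvz2 : (e i0).val + z ≠ (e i0).val := by
      intro h
      exact hz1 (add_eq_left.mp h)
    have hmem := R.add_mem (hA z hz1 hz2) (hA ((e i0).val + z) hvz hvz2)
    have heq : ((z, (0:ZMod 2)) + ((e i0).val + z, (0:ZMod 2))) = ((e i0).val, (0:ZMod 2)) := by
      have h1 : z + ((e i0).val + z) = (e i0).val := by
        funext i
        have : ∀ a b : ZMod 2, b + (a + b) = a := by decide
        exact this _ _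
      simp [Prod.ext_iff, h1]
    rwa [heq] at hmem
  have hD : ((0 : Vk k), (1 : ZMod 2)) ∈ R := by
    have hmem := R.add_mem hB hC
    have heq : (((e i0).val, (1:ZMod 2)) + ((e i0).val, (0:ZMod 2))) = ((0 : Vk k), (1:ZMod 2)) := by
      have h1 : (e i0).val + (e i0).val = 0 := by funext i; exact hchar _
      simp [Prod.ext_iff, h1]
    rwa [heq] at hmem
  have hE : ∀ x : Vk k, (x, (0 : ZMod 2)) ∈ R := by
    intro x
    rcases eq_or_ne x 0 with rfl | hx
    · exact zero_mem R
    rcases eq_or_ne x (e i0).val with rfl | hxv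
    · exact hC
    · exact hA x hx hxv
  rintro ⟨u, b⟩
  rcases zmod2_cases b with rfl | rfl
  · exact hE u
  · have hmem := R.add_mem (hE u) hD
    have heq : ((u, (0:ZMod 2)) + ((0 : Vk k), (1:ZMod 2))) = (u, (1:ZMod 2)) := by
      simp [Prod.ext_iff]
    rwa [heq] at hmem

end hammingcode

section two
variable {n k : ℕ}

lemma ker_card (φ : (Fin n → ZMod 2) →+ (Vk k × ZMod 2)) (hs : Function.Surjective φ)
    (hnk : k + 1 ≤ n) :
    Nat.card φ.ker = 2 ^ (n - k - 1) := by
  have h1 : Nat.card (Fin n → ZMod 2) = Nat.card ((Fin n → ZMod 2) ⧸ φ.ker) * Nat.card φ.ker :=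
    AddSubgroup.card_eq_card_quotient_mul_card_addSubgroup φ.ker
  have h2 : Nat.card ((Fin n → ZMod 2) ⧸ φ.ker) = Nat.card (Vk k × ZMod 2) :=
    Nat.card_congr (QuotientAddGroup.quotientKerEquivOfSurjective φ hs).toEquiv
  have h3 : Nat.card (Fin n → ZMod 2) = 2 ^ n := by simp [Nat.card_eq_fintype_card]
  have h4 : Nat.card (Vk k × ZMod 2) = 2 ^ (k + 1) := by
    simp [Nat.card_eq_fintype_card, pow_succ]
  rw [h2, h3, h4] at h1
  have h5 : 2 ^ n = 2 ^ (k + 1) * 2 ^ (n - k - 1) := by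
    rw [← pow_add]
    congr 1
    omega
  rw [h5] at h1
  have hpos : 0 < 2 ^ (k + 1) := Nat.pow_pos (by norm_num)
  exact (Nat.eq_of_mul_eq_mul_left hpos h1.symm)

lemma min_weight (e : Fin n ≃ {x : Vk k // x ≠ 0}) (u : Fin n → ZMod 2)
    (hchi : ∑ i, u i • (e i).val = 0) (hu : u ≠ 0) :
    3 ≤ (Finset.univ.filter (fun i => u i = 1)).card := by
  classical
  set A := Finset.univ.filter (fun i => u i = 1) with hA
  have hsum : ∑ i ∈ A, (e i).val = 0 := by
    have h : ∑ i ∈ A, (e i).val = ∑ i : Fin n, u i • (e i).val := by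
      rw [hA, Finset.sum_filter]
      apply Finset.sum_congr rfl
      intro i _
      rcases (by decide : ∀ a : ZMod 2, a = 0 ∨ a = 1) (u i) with h | h <;> simp [h]
    exact h.trans hchi
  have hne : A.Nonempty := by
    rcases Function.ne_iff.mp hu with ⟨i, hi⟩
    refine ⟨i, ?_⟩
    rw [hA, Finset.mem_filter]
    rcases (by decide : ∀ a : ZMod 2, a = 0 ∨ a = 1) (u i) with h | h
    · exact absurd h hi
    · exact ⟨Finset.mem_univ _, h⟩
  by_contra hcard
  push_neg at hcard
  interval_cases h : A.card
  · exact absurd (Finset.card_eq_zero.mp h ▸ hne) (by simp)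
  · obtain ⟨i, hi⟩ := Finset.card_eq_one.mp h
    rw [hi, Finset.sum_singleton] at hsum
    exact (e i).prop hsum
  · obtain ⟨i, j, hij, hij2⟩ := Finset.card_eq_two.mp h
    rw [hij2, Finset.sum_insert (by simp [hij]), Finset.sum_singleton] at hsum
    have : (e i).val = (e j).val := by
      funext x
      have := congrFun hsum x
      have key : ∀ a b : ZMod 2, a + b = 0 → a = b := by decide
      exact key _ _ this
    exact hij (e.injective (Subtype.ext this))

lemma sum_all_vk (hk : 2 ≤ k) : ∑ x : Vk k, x = 0 := by
  funext j
  rw [Finset.sum_apply]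
  have : Nontrivial (Fin k) := ⟨⟨0, by omega⟩, ⟨1, by omega⟩, by
    intro h
    have := congrArg Fin.val h
    simp at this⟩
  obtain ⟨j', hj'⟩ := exists_ne j
  apply Finset.sum_involution (fun x _ => x + Pi.single j' 1)
  · intro a _
    simp only [Pi.add_apply]
    rw [Pi.single_eq_of_ne (Ne.symm hj')]
    rcases (by decide : ∀ a : ZMod 2, a + (a + 0) = 0) (a j) with h
    exact h
  · intro a _ _
    intro h
    have := congrFun h j'
    simp only [Pi.add_apply, Pi.single_eq_same] at this
    rcases (by decide : ∀ a : ZMod 2, ¬ a + 1 = a) (a j') with h2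
    exact h2 this
  · intro a _
    funext x
    simp only [Pi.add_apply]
    rcases (by decide : ∀ a b : ZMod 2, a + b + b = a) (a x) ((Pi.single j' 1 : Vk k) x) with h
    exact h
  · intro a _; exact Finset.mem_univ _

lemma chi_ones (e : Fin n ≃ {x : Vk k // x ≠ 0}) (hk : 2 ≤ k) :
    ∑ i : Fin n, (1 : ZMod 2) • (e i).val = 0 := by
  simp only [one_smul]
  rw [e.sum_comp (fun x : {x : Vk k // x ≠ 0} => x.val)]
  classical
  have h1 : ∑ x : {x : Vk k // x ≠ 0}, (x : Vk k)
      = ∑ x ∈ Finset.univ.filter (fun x : Vk k => x ≠ 0), x :=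
    (Finset.sum_subtype (p := fun x : Vk k => x ≠ 0) (Finset.univ.filter (fun x : Vk k => x ≠ 0)) (by intro x; simp) (fun x => x)).symm
  rw [h1, Finset.sum_filter_of_ne (by intro x _ h; exact h)]
  exact sum_all_vk hk
end two

lemma deg_ge_three {n : ℕ} {H : SimpleGraph (Fin n)} [DecidableRel H.Adj]
    (h3 : IsThreeConnected H) (v : Fin n) :
    3 ≤ (Finset.univ.filter (fun x => H.Adj v x)).card := by
  obtain ⟨hcard, hconn⟩ := h3
  by_contra hdeg
  push_neg at hdeg
  set S : Set (Fin n) := ↑(Finset.univ.filter (fun x => H.Adj v x)) with hS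
  have hS2 : S.ncard ≤ 2 := by
    rw [hS, Set.ncard_coe_finset]
    omega
  have hcon := hconn S hS2
  have hvS : v ∈ Sᶜ := by
    simp only [hS, Set.mem_compl_iff, Finset.coe_filter, Set.mem_setOf_eq]
    intro h
    exact H.irrefl h.2
  -- find another vertex outside S ∪ {v}
  have : ∃ w : Fin n, w ≠ v ∧ w ∈ Sᶜ := by
    by_contra h
    push_neg at h
    have hsub : (Finset.univ : Finset (Fin n)) ⊆
        insert v (Finset.univ.filter (fun x => H.Adj v x)) := by
      intro x _
      rcases eq_or_ne x v with rfl | hx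
      · exact Finset.mem_insert_self _ _
      · have := h x hx
        rw [Set.notMem_compl_iff] at this
        exact Finset.mem_insert_of_mem this
    have := Finset.card_le_card hsub
    have h4 : (Finset.univ : Finset (Fin n)).card = n := by simp
    have h5 : (insert v (Finset.univ.filter (fun x => H.Adj v x))).card
        ≤ (Finset.univ.filter (fun x => H.Adj v x)).card + 1 := Finset.card_insert_le _ _
    simp only [Fintype.card_fin] at hcard
    omega
  obtain ⟨w, hwv, hwS⟩ := this
  have hreach := hcon.preconnected ⟨v, hvS⟩ ⟨w, hwS⟩
  obtain ⟨p⟩ := hreach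
  cases p with
  | nil => exact hwv rfl
  | cons h q =>
    rename_i b
    have hadj : H.Adj v b.val := h
    have : b.val ∈ S := by
      simp [hS, hadj]
    exact b.prop this

lemma upper_bound {k n : ℕ} (hk : 2 ≤ k) (hn : n = 2 ^ k - 1)
    (𝓖 : Finset (SimpleGraph (Fin n))) (hne : 𝓖.Nonempty)
    (hclosed : ∀ G ∈ 𝓖, ∀ G' ∈ 𝓖, symmDiffG G G' ∈ 𝓖)
    (hconn : ∀ G ∈ 𝓖, ∀ G' ∈ 𝓖, G ≠ G' → IsThreeConnected (symmDiffG G G')) :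
    𝓖.card ≤ 2 ^ (n - k - 1) := by
  classical
  rcases le_or_gt 𝓖.card 1 with hc1 | hc1
  · exact hc1.trans Nat.one_le_two_pow
  obtain ⟨G1, hG1, G2, hG2, hG12⟩ := Finset.one_lt_card.mp hc1
  have hn4 : 4 ≤ n := by
    have := (hconn G1 hG1 G2 hG2 hG12).1
    simpa using this
  set v0 : Fin n := ⟨0, by omega⟩ with hv0
  have hone : ((⟨1, by omega⟩ : Fin n)) ≠ v0 := by
    intro h
    have := congrArg Fin.val h
    simp [hv0] at this
  set N : SimpleGraph (Fin n) → ({i : Fin n // i ≠ v0} → ZMod 2) :=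
    fun G i => if G.Adj v0 i.val then 1 else 0 with hNdef
  have N_add : ∀ G G', N (symmDiffG G G') = N G + N G' := by
    intro G G'
    funext i
    simp only [hNdef, Pi.add_apply]
    by_cases h1 : G.Adj v0 i.val <;> by_cases h2 : G'.Adj v0 i.val <;>
      simp only [symmDiffG, h1, h2, not_true, not_false_iff, and_self, and_true, true_and,
        and_false, false_and, or_false, false_or, if_true, if_false, or_self] <;> decide
  have dist3 : ∀ G ∈ 𝓖, ∀ G' ∈ 𝓖, G ≠ G' →
      3 ≤ (Finset.univ.filter (fun i : {i : Fin n // i ≠ v0} => N G i ≠ N G' i)).card := by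
    intro G hG G' hG' hGG
    have h3 := hconn G hG G' hG' hGG
    have hdeg := deg_ge_three h3 v0
    refine le_trans hdeg (Finset.card_le_card_of_injOn
      (fun x => if h : x = v0 then ⟨⟨1, by omega⟩, hone⟩ else ⟨x, h⟩) ?_ ?_)
    · intro x hx
      rw [Finset.mem_coe, Finset.mem_filter] at hx
      obtain ⟨-, hadj⟩ := hx
      have hxv : x ≠ v0 := fun h => (symmDiffG G G').irrefl (v := v0) (h ▸ hadj)
      simp only [dif_neg hxv, Finset.mem_coe, Finset.mem_filter]
      refine ⟨Finset.mem_univ _, ?_⟩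
      simp only [hNdef]
      rcases hadj with ⟨h1, h2⟩ | ⟨h1, h2⟩ <;> simp [h1, h2]
    · intro x hx y hy hxy
      rw [Finset.mem_coe, Finset.mem_filter] at hx hy
      have hxv : x ≠ v0 := fun h => (symmDiffG G G').irrefl (v := v0) (h ▸ hx.2)
      have hyv : y ≠ v0 := fun h => (symmDiffG G G').irrefl (v := v0) (h ▸ hy.2)
      simp only [dif_neg hxv, dif_neg hyv] at hxy
      exact congrArg Subtype.val hxy
  -- injectivity of N on 𝓖
  have hNinj : Set.InjOn N ↑𝓖 := by
    intro G hG G' hG' h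
    by_contra hGG
    have := dist3 G hG G' hG' hGG
    rw [h] at this
    simp at this
  -- ball packing
  set F : {G // G ∈ 𝓖} × Option {i : Fin n // i ≠ v0} → ({i : Fin n // i ≠ v0} → ZMod 2) :=
    fun p => N p.1.val + (p.2.elim 0 fun j => Pi.single j 1) with hFdef
  have hFinj : Function.Injective F := by
    rintro ⟨⟨G, hG⟩, o⟩ ⟨⟨G', hG'⟩, o'⟩ heq
    simp only [hFdef] at heq
    have supp0 : ∀ (o : Option {i : Fin n // i ≠ v0}) (i : {i : Fin n // i ≠ v0}),
        i ∉ (o.elim (∅ : Finset _) fun j => {j}) →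
        (o.elim (0 : {i : Fin n // i ≠ v0} → ZMod 2) fun j => Pi.single j 1) i = 0 := by
      rintro (_ | j) i hi
      · rfl
      · simp only [Option.elim] at hi ⊢
        rw [Finset.mem_singleton] at hi
        exact Pi.single_eq_of_ne hi _
    have hGeq : G = G' := by
      by_contra hGG
      have h3 := dist3 G hG G' hG' hGG
      have hsub : (Finset.univ.filter (fun i : {i : Fin n // i ≠ v0} => N G i ≠ N G' i)) ⊆
          (o.elim (∅ : Finset _) fun j => {j}) ∪ (o'.elim (∅ : Finset _) fun j => {j}) := by
        intro i hi
        rw [Finset.mem_filter] at hi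
        by_contra hmem
        rw [Finset.mem_union] at hmem
        push_neg at hmem
        have e1 := supp0 o i hmem.1
        have e2 := supp0 o' i hmem.2
        have := congrFun heq i
        simp only [Pi.add_apply, e1, e2, add_zero] at this
        exact hi.2 this
      have hcard := Finset.card_le_card hsub
      have hcard2 : ((o.elim (∅ : Finset _) fun j => {j}) ∪
          (o'.elim (∅ : Finset _) fun j => {j})).card ≤ 2 := by
        refine le_trans (Finset.card_union_le _ _) ?_
        have : ∀ (o : Option {i : Fin n // i ≠ v0}),
            (o.elim (∅ : Finset _) fun j => ({j} : Finset _)).card ≤ 1 := by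
          rintro (_ | j) <;> simp
        have h1 := this o
        have h2 := this o'
        omega
      omega
    subst hGeq
    have hco : (o.elim (0 : {i : Fin n // i ≠ v0} → ZMod 2) fun j => Pi.single j 1)
        = (o'.elim (0 : {i : Fin n // i ≠ v0} → ZMod 2) fun j => Pi.single j 1) :=
      add_left_cancel heq
    have ho : o = o' := by
      match o, o' with
      | none, none => rfl
      | none, some j =>
        exfalso
        have h := congrFun hco j
        simp only [Option.elim, Pi.zero_apply, Pi.single_eq_same] at h
        exact (by decide : (0 : ZMod 2) ≠ 1) h
      | some j, none =>
        exfalso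
        have h := congrFun hco j
        simp only [Option.elim, Pi.zero_apply, Pi.single_eq_same] at h
        exact (by decide : (0 : ZMod 2) ≠ 1) h.symm
      | some j, some j' =>
        congr 1
        by_contra hjj
        have h := congrFun hco j
        simp only [Option.elim, Pi.single_eq_same] at h
        rw [Pi.single_eq_of_ne hjj] at h
        exact (by decide : (1 : ZMod 2) ≠ 0) h
    rw [ho]
  have hpack := Fintype.card_le_of_injective F hFinj
  have hcardI : Fintype.card {i : Fin n // i ≠ v0} = n - 1 := by
    rw [Fintype.card_subtype_compl (fun i : Fin n => i = v0)]
    simp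
  have hcardfun : Fintype.card ({i : Fin n // i ≠ v0} → ZMod 2) = 2 ^ (n - 1) := by
    rw [Fintype.card_fun, hcardI]
    simp
  have hcarddom : Fintype.card ({G // G ∈ 𝓖} × Option {i : Fin n // i ≠ v0})
      = 𝓖.card * n := by
    rw [Fintype.card_prod, Fintype.card_option, hcardI, Fintype.card_coe]
    congr 1
    omega
  rw [hcarddom, hcardfun] at hpack
  -- 𝓖.card is a power of 2
  set Im := 𝓖.image N with hIm
  have hImcard : Im.card = 𝓖.card := Finset.card_image_of_injOn hNinj
  have hzero_mem : (0 : {i : Fin n // i ≠ v0} → ZMod 2) ∈ Im := by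
    obtain ⟨G, hG⟩ := hne
    have : N (symmDiffG G G) = 0 := by
      rw [N_add]
      funext i
      exact (by decide : ∀ a : ZMod 2, a + a = 0) _
    rw [← this]
    exact Finset.mem_image_of_mem N (hclosed G hG G hG)
  have hadd_mem : ∀ a ∈ Im, ∀ b ∈ Im, a + b ∈ Im := by
    intro a ha b hb
    rw [hIm, Finset.mem_image] at ha hb
    obtain ⟨G, hG, rfl⟩ := ha
    obtain ⟨G', hG', rfl⟩ := hb
    rw [← N_add]
    exact Finset.mem_image_of_mem N (hclosed G hG G' hG')
  set A : AddSubgroup ({i : Fin n // i ≠ v0} → ZMod 2) :=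
    { carrier := ↑Im
      add_mem' := fun {a b} ha hb => hadd_mem a ha b hb
      zero_mem' := hzero_mem
      neg_mem' := by
        intro x hx
        have hxx : x + x = 0 := funext fun i => (by decide : ∀ a : ZMod 2, a + a = 0) _
        have : -x = x := neg_eq_of_add_eq_zero_left hxx
        rw [this]
        exact hx } with hA
  have hdvd : Nat.card A ∣ Nat.card ({i : Fin n // i ≠ v0} → ZMod 2) :=
    AddSubgroup.card_addSubgroup_dvd_card A
  have hcardA : Nat.card A = 𝓖.card := by
    have h1 : Nat.card A = Nat.card ↥(↑Im : Set ({i : Fin n // i ≠ v0} → ZMod 2)) := rfl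
    rw [h1, Nat.card_coe_set_eq, Set.ncard_coe_finset, hImcard]
  rw [hcardA, Nat.card_eq_fintype_card, hcardfun] at hdvd
  obtain ⟨d, hd, hdeq⟩ := (Nat.dvd_prime_pow Nat.prime_two).mp hdvd
  -- arithmetic
  rw [hdeq] at hpack ⊢
  have hklt : 2 ^ (k - 1) < n := by
    have h2 : 2 ^ k = 2 * 2 ^ (k - 1) := by
      rw [← pow_succ']
      congr 1
      omega
    have : 2 ≤ 2 ^ (k - 1) := by
      calc 2 = 2 ^ 1 := rfl
      _ ≤ 2 ^ (k - 1) := Nat.pow_le_pow_right (by norm_num) (by omega)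
    omega
  have hstrict : 2 ^ (d + (k - 1)) < 2 ^ (n - 1) := by
    calc 2 ^ (d + (k - 1)) = 2 ^ d * 2 ^ (k - 1) := pow_add 2 d (k - 1)
      _ < 2 ^ d * n := by
          exact Nat.mul_lt_mul_of_pos_left hklt (Nat.pow_pos (by norm_num))
      _ ≤ 2 ^ (n - 1) := hpack
  have hexp : d + (k - 1) < n - 1 := by
    exact (Nat.pow_lt_pow_iff_right (by norm_num)).mp hstrict
  apply Nat.pow_le_pow_right (by norm_num)
  omega

lemma two_pow_lower (k : ℕ) (hk : 2 ≤ k) : k + 2 ≤ 2 ^ k := by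
  induction k, hk using Nat.le_induction with
  | base => norm_num
  | succ m hm ih => rw [pow_succ]; omega

lemma exists_family {k n : ℕ} (hk : 2 ≤ k) (hn : n = 2 ^ k - 1) :
    ∃ 𝓖 : Finset (SimpleGraph (Fin n)),
        𝓖.Nonempty ∧
        (∀ G ∈ 𝓖, ∀ G' ∈ 𝓖, symmDiffG G G' ∈ 𝓖) ∧
        (∀ G ∈ 𝓖, ∀ G' ∈ 𝓖, G ≠ G' → IsThreeConnected (symmDiffG G G')) ∧
        𝓖.card = 2 ^ (n - k - 1) := by
  classical
  have h2k : k + 2 ≤ 2 ^ k := two_pow_lower k hk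
  have h2kpos : 1 ≤ 2 ^ k := Nat.one_le_two_pow
  have hn3 : 3 ≤ n := by omega
  have hcardnz : Fintype.card {x : Vk k // x ≠ 0} = n := by
    have h2 : Fintype.card {x : Vk k // x ≠ 0} = Fintype.card {x : Vk k // ¬ x = 0} :=
      Fintype.card_congr (Equiv.subtypeEquivRight (fun x => Iff.rfl))
    rw [h2, Fintype.card_subtype_compl (fun x : Vk k => x = 0), Fintype.card_subtype_eq]
    simp [hn, Vk]
  obtain ⟨e⟩ : Nonempty (Fin n ≃ {x : Vk k // x ≠ 0}) :=
    ⟨Fintype.equivOfCardEq (by simp [hcardnz])⟩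
  set i0 : Fin n := ⟨0, by omega⟩ with hi0
  set φ := chi e i0 with hφ
  have hker_i0 : ∀ w ∈ φ.ker, w i0 = 0 := by
    intro w hw
    have := congrArg Prod.snd (AddMonoidHom.mem_ker.mp hw)
    exact this
  have hker_sum : ∀ w ∈ φ.ker, ∑ i, w i • (e i).val = 0 := by
    intro w hw
    have := congrArg Prod.fst (AddMonoidHom.mem_ker.mp hw)
    exact this
  set KS : Finset (Fin n → ZMod 2) := Finset.univ.filter (· ∈ φ.ker) with hKS
  have hKSmem : ∀ w, w ∈ KS ↔ w ∈ φ.ker := by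
    intro w
    rw [hKS, Finset.mem_filter]
    simp
  have hKScard : KS.card = 2 ^ (n - k - 1) := by
    rw [← ker_card φ (chi_surj e i0 hk) (by omega)]
    rw [Nat.card_eq_fintype_card, Fintype.card_subtype]
  have hinj : Set.InjOn gOf (KS : Set (Fin n → ZMod 2)) := by
    intro w hw w' hw' hww
    funext i
    have hadj := gOf_adj w i0 i
    rw [hww, gOf_adj] at hadj
    have h0 : w i0 = 0 := hker_i0 w ((hKSmem w).mp hw)
    have h0' : w' i0 = 0 := hker_i0 w' ((hKSmem w').mp hw')
    rw [h0, h0'] at hadj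
    exact (by decide : ∀ a b : ZMod 2, ((0 : ZMod 2) ≠ b ↔ (0 : ZMod 2) ≠ a) → a = b) (w i) (w' i) hadj
  refine ⟨KS.image gOf, ?_, ?_, ?_, ?_⟩
  · exact ⟨gOf 0, Finset.mem_image_of_mem _ ((hKSmem 0).mpr (zero_mem _))⟩
  · intro G hG G' hG'
    obtain ⟨w, hw, rfl⟩ := Finset.mem_image.mp hG
    obtain ⟨w', hw', rfl⟩ := Finset.mem_image.mp hG'
    rw [symmDiffG_gOf]
    exact Finset.mem_image_of_mem _
      ((hKSmem _).mpr (add_mem ((hKSmem w).mp hw) ((hKSmem w').mp hw')))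
  · intro G hG G' hG' hGG
    obtain ⟨w, hw, rfl⟩ := Finset.mem_image.mp hG
    obtain ⟨w', hw', rfl⟩ := Finset.mem_image.mp hG'
    rw [symmDiffG_gOf]
    set u := w + w' with hu
    have hune : u ≠ 0 := by
      intro h
      exact hGG (congrArg gOf (pi_add_eq_zero h))
    have humem : u ∈ φ.ker := add_mem ((hKSmem w).mp hw) ((hKSmem w').mp hw')
    have hA : 3 ≤ (Finset.univ.filter (fun i => u i = 1)).card :=
      min_weight e u (hker_sum u humem) hune
    have hB : 3 ≤ (Finset.univ.filter (fun i => u i = 0)).card := by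
      set u1 : Fin n → ZMod 2 := u + (fun _ => 1) with hu1
      have hchi1 : ∑ i, u1 i • (e i).val = 0 := by
        have hsplit : ∑ i, u1 i • (e i).val
            = ∑ i, u i • (e i).val + ∑ i : Fin n, (1 : ZMod 2) • (e i).val := by
          rw [← Finset.sum_add_distrib]
          apply Finset.sum_congr rfl
          intro i _
          rw [hu1]
          simp [add_smul]
        rw [hsplit, hker_sum u humem, chi_ones e hk, add_zero]
      have hu1ne : u1 ≠ 0 := by
        intro h
        have := congrFun h i0
        rw [hu1] at this
        simp only [Pi.add_apply, Pi.zero_apply] at this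
        rw [hker_i0 u humem] at this
        exact (by decide : ¬ ((0 : ZMod 2) + 1 = 0)) this
      have := min_weight e u1 hchi1 hu1ne
      have hfeq : (Finset.univ.filter (fun i => u1 i = 1))
          = (Finset.univ.filter (fun i => u i = 0)) := by
        apply Finset.filter_congr
        intro i _
        rw [hu1]
        simp only [Pi.add_apply]
        exact (by decide : ∀ a : ZMod 2, (a + 1 = 1 ↔ a = 0)) (u i)
      rwa [hfeq] at this
    exact gOf_threeConnected u hA hB
  · rw [Finset.card_image_of_injOn hinj, hKScard]

theorem stmt_3 (k n : ℕ) (hk : 2 ≤ k) (hn : n = 2 ^ k - 1) :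
    IsGreatest {m : ℕ | ∃ 𝓖 : Finset (SimpleGraph (Fin n)),
        𝓖.Nonempty ∧
        (∀ G ∈ 𝓖, ∀ G' ∈ 𝓖, symmDiffG G G' ∈ 𝓖) ∧
        (∀ G ∈ 𝓖, ∀ G' ∈ 𝓖, G ≠ G' → IsThreeConnected (symmDiffG G G')) ∧
        𝓖.card = m}
      (2 ^ (n - k - 1)) := by
  constructor
  · obtain ⟨F, h1, h2, h3, h4⟩ := exists_family hk hn
    exact ⟨F, h1, h2, h3, h4⟩
  · rintro m ⟨F, h1, h2, h3, rfl⟩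
    exact upper_bound hk hn F h1 h2 h3
end

section
/- Let n ≥ 3 be odd. Then (1) there exists a family 𝓜 of simple graphs on the vertex set Fin n of cardinality 2^(n(n−1)/2 − (n+1)/2) such that for no two distinct members G, G' ∈ 𝓜 does the symmetric difference G ⊕ G' contain a spanning star; and (2) every family 𝓜 of simple graphs on Fin n with this property satisfies |𝓜|² ≤ 2^(n(n−2)). -/
open SimpleGraph Filter

/-- A graph contains a spanning star if some vertex is adjacent to all other vertices. -/
def HasSpanningStar {V : Type*} (G : SimpleGraph V) : Prop :=
  ∃ v : V, ∀ w : V, w ≠ v → G.Adj v w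

open Finset in
lemma shearer_aux : ∀ (n : ℕ) (A : Finset (Fin n → Fin n → Bool)),
    (∀ f ∈ A, ∀ i j, f i j = f j i) →
    (∀ f ∈ A, ∀ i, f i i = false) →
    A.card ^ 2 ≤ ∏ v, (A.image (fun f => f v)).card := by
  intro n
  induction n with
  | zero =>
      intro A _ _
      have h1 : A.card ≤ 1 := by
        refine Finset.card_le_one.mpr (fun a _ b _ => ?_)
        funext i; exact i.elim0
      simpa using Nat.pow_le_pow_left h1 2
  | succ n ih =>
      intro A hsymm hdiag
      classical
      set L : Fin (n+1) := Fin.last n with hLdef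
      set R : Finset (Fin (n+1) → Bool) := A.image (fun f => f L) with hRdef
      set Fib : (Fin (n+1) → Bool) → Finset (Fin (n+1) → Fin (n+1) → Bool) :=
        fun s => A.filter (fun f => f L = s) with hFibdef
      set res : (Fin (n+1) → Fin (n+1) → Bool) → (Fin n → Fin n → Bool) :=
        fun f => fun i j => f i.castSucc j.castSucc with hresdef
      set As : (Fin (n+1) → Bool) → Finset (Fin n → Fin n → Bool) :=
        fun s => (Fib s).image res with hAsdef
      set Row : Fin n → Finset (Fin (n+1) → Bool) :=
        fun w => A.image (fun f => f w.castSucc) with hRowdef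
      set m : Fin n → Bool → ℕ := fun w b =>
        (((Row w).filter (fun r => r L = b)).image
          (fun r => fun i : Fin n => r i.castSucc)).card with hmdef
      have hAcard : A.card = ∑ s ∈ R, (Fib s).card :=
        card_eq_sum_card_fiberwise (fun f hf => mem_image_of_mem _ hf)
      have hFibAs : ∀ s ∈ R, (Fib s).card = (As s).card := by
        intro s hs
        refine (Finset.card_image_of_injOn ?_).symm
        intro f hf g hg hfg
        have hfA := (mem_filter.mp hf).1
        have hgA := (mem_filter.mp hg).1
        have hfL : f L = g L := by rw [(mem_filter.mp hf).2, (mem_filter.mp hg).2]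
        funext i j
        refine Fin.lastCases ?_ (fun i' => ?_) i
        · exact congrFun hfL j
        · refine Fin.lastCases ?_ (fun j' => ?_) j
          · rw [hsymm f hfA i'.castSucc L, hsymm g hgA i'.castSucc L]
            exact congrFun hfL i'.castSucc
          · exact congrFun (congrFun hfg i') j'
      have hproj : ∀ s ∈ R, ∀ w : Fin n,
          ((As s).image (fun g => g w)).card ≤ m w (s w.castSucc) := by
        intro s hs w
        refine card_le_card ?_
        intro x hx
        obtain ⟨g, hg, rfl⟩ := mem_image.mp hx
        obtain ⟨f, hf, rfl⟩ := mem_image.mp hg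
        have hfA := (mem_filter.mp hf).1
        have hfL := (mem_filter.mp hf).2
        refine mem_image.mpr ⟨f w.castSucc, mem_filter.mpr ⟨mem_image_of_mem _ hfA, ?_⟩, rfl⟩
        rw [hsymm f hfA w.castSucc L]
        exact congrFun hfL w.castSucc
      have hIH : ∀ s ∈ R, (Fib s).card ^ 2 ≤ ∏ w, m w (s w.castSucc) := by
        intro s hs
        rw [hFibAs s hs]
        calc (As s).card ^ 2 ≤ ∏ w, ((As s).image (fun g => g w)).card := by
              refine ih (As s) ?_ ?_
              · intro g hg i j
                obtain ⟨f, hf, rfl⟩ := mem_image.mp hg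
                exact hsymm f (mem_filter.mp hf).1 _ _
              · intro g hg i
                obtain ⟨f, hf, rfl⟩ := mem_image.mp hg
                exact hdiag f (mem_filter.mp hf).1 _
          _ ≤ ∏ w, m w (s w.castSucc) := Finset.prod_le_prod' (fun w _ => hproj s hs w)
      have hsum : ∑ s ∈ R, ∏ w, m w (s w.castSucc)
          ≤ ∏ w, (m w true + m w false) := by
        have hRinj : ∀ s ∈ R, ∀ t ∈ R,
            (fun w : Fin n => s w.castSucc) = (fun w : Fin n => t w.castSucc) → s = t := by
          intro s hs t ht hst
          obtain ⟨f, hf, rfl⟩ := mem_image.mp hs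
          obtain ⟨g, hg, rfl⟩ := mem_image.mp ht
          funext i
          refine Fin.lastCases ?_ (fun i' => congrFun hst i') i
          rw [hdiag f hf, hdiag g hg]
        calc ∑ s ∈ R, ∏ w, m w (s w.castSucc)
            = ∑ t ∈ R.image (fun s => fun w : Fin n => s w.castSucc), ∏ w, m w (t w) := by
              exact (Finset.sum_image
                (f := fun t : Fin n → Bool => ∏ w, m w (t w)) hRinj).symm
          _ ≤ ∑ t : Fin n → Bool, ∏ w, m w (t w) :=
              sum_le_sum_of_subset (subset_univ _)
          _ = ∏ w, ∑ b : Bool, m w b := by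
              rw [Finset.prod_univ_sum, Fintype.piFinset_univ]
          _ = ∏ w, (m w true + m w false) := by
              refine Finset.prod_congr rfl (fun w _ => ?_)
              simp
      have hcup : ∀ w : Fin n, m w true + m w false ≤ (Row w).card := by
        intro w
        have h1 : m w true ≤ ((Row w).filter (fun r => r L = true)).card := by
          simp only [hmdef]; exact card_image_le
        have hpred : ((Row w).filter (fun r => r L = false))
            = ((Row w).filter (fun r => ¬ (r L = true))) := by
          apply Finset.filter_congr
          intro r _
          simp
        have h2 : m w false ≤ ((Row w).filter (fun r => ¬ (r L = true))).card := by
          simp only [hmdef]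
          rw [← hpred]; exact card_image_le
        have h3 := Finset.card_filter_add_card_filter_not
          (s := Row w) (p := fun r => r L = true)
        rw [← h3]
        exact Nat.add_le_add h1 h2
      calc A.card ^ 2 = (∑ s ∈ R, (Fib s).card) ^ 2 := by rw [hAcard]
        _ ≤ R.card * ∑ s ∈ R, (Fib s).card ^ 2 := sq_sum_le_card_mul_sum_sq
        _ ≤ R.card * ∑ s ∈ R, ∏ w, m w (s w.castSucc) :=
            Nat.mul_le_mul_left _ (Finset.sum_le_sum hIH)
        _ ≤ R.card * ∏ w, (m w true + m w false) := Nat.mul_le_mul_left _ hsum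
        _ ≤ R.card * ∏ w, (Row w).card :=
            Nat.mul_le_mul_left _ (Finset.prod_le_prod' (fun w _ => hcup w))
        _ = ∏ v, (A.image (fun f => f v)).card := by
            rw [Fin.prod_univ_castSucc (f := fun v => (A.image (fun f => f v)).card)]
            rw [mul_comm]

open Finset in
lemma part2_bound (n : ℕ) (hn : 3 ≤ n) (𝓜 : Finset (SimpleGraph (Fin n)))
    (h : ∀ G ∈ 𝓜, ∀ G' ∈ 𝓜, G ≠ G' → ¬ HasSpanningStar (symmDiffG G G')) :
    𝓜.card ^ 2 ≤ 2 ^ (n * (n - 2)) := by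
  classical
  set mat : SimpleGraph (Fin n) → (Fin n → Fin n → Bool) :=
    fun G => fun v w => if G.Adj v w then true else false with hmatdef
  have hmat_iff : ∀ G v w, mat G v w = true ↔ G.Adj v w := by
    intro G v w
    by_cases hA : G.Adj v w <;> simp [hmatdef, hA]
  have hmatinj : Function.Injective mat := by
    intro G G' hGG'
    ext v w
    rw [← hmat_iff, ← hmat_iff, hGG']
  set A : Finset (Fin n → Fin n → Bool) := 𝓜.image mat with hAdef
  have hAcard : A.card = 𝓜.card := Finset.card_image_of_injective _ hmatinj
  have hsymm : ∀ f ∈ A, ∀ i j, f i j = f j i := by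
    intro f hf i j
    obtain ⟨G, hG, rfl⟩ := mem_image.mp hf
    by_cases hA : G.Adj i j
    · simp [hmatdef, hA, hA.symm]
    · have : ¬ G.Adj j i := fun hc => hA hc.symm
      simp [hmatdef, hA, this]
  have hdiag : ∀ f ∈ A, ∀ i, f i i = false := by
    intro f hf i
    obtain ⟨G, hG, rfl⟩ := mem_image.mp hf
    simp [hmatdef]
  -- bound each projection
  have key : ∀ v : Fin n, (A.image (fun f => f v)).card ≤ 2 ^ (n - 2) := by
    intro v
    set S : Finset (Fin n → Bool) := A.image (fun f => f v) with hSdef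
    set ι : (Fin n → Bool) → (Fin n → Bool) :=
      fun r => fun w => if w = v then false else !(r w) with hιdef
    have hSv : ∀ r ∈ S, r v = false := by
      intro r hr
      obtain ⟨f, hf, rfl⟩ := mem_image.mp hr
      exact hdiag f hf v
    have hιι : ∀ r ∈ S, ι (ι r) = r := by
      intro r hr
      funext w
      by_cases hw : w = v
      · subst hw; simp [hιdef, hSv r hr]
      · simp [hιdef, hw]
    -- disjointness
    have hdisj : ∀ r ∈ S, ι r ∉ S := by
      intro r hr hιr
      obtain ⟨f, hf, hfr⟩ := mem_image.mp hr
      obtain ⟨g, hg, hgr⟩ := mem_image.mp hιr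
      obtain ⟨G, hG, rfl⟩ := mem_image.mp hf
      obtain ⟨G', hG', rfl⟩ := mem_image.mp hg
      -- pick some w ≠ v
      obtain ⟨u, hu⟩ : ∃ u : Fin n, u ≠ v := by
        have : 1 < Fintype.card (Fin n) := by simp; omega
        exact Fintype.exists_ne_of_one_lt_card this v
      have hadj : ∀ w : Fin n, w ≠ v → (symmDiffG G' G).Adj v w := by
        intro w hw
        have h1 : mat G' v w = !(mat G v w) := by
          have := congrFun hgr w
          rw [this, ← hfr]
          simp [hιdef, hw]
        by_cases hA : G.Adj v w
        · have : mat G v w = true := (hmat_iff G v w).mpr hA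
          rw [this] at h1
          have : ¬ G'.Adj v w := by
            intro hc
            have := (hmat_iff G' v w).mpr hc
            rw [h1] at this
            simp at this
          exact Or.inr ⟨hA, this⟩
        · have hmf : mat G v w = false := by
            rcases Bool.eq_false_or_eq_true (mat G v w) with h' | h'
            · exact absurd ((hmat_iff G v w).mp h') hA
            · exact h'
          rw [hmf] at h1
          have : G'.Adj v w := (hmat_iff G' v w).mp (by rw [h1]; rfl)
          exact Or.inl ⟨this, hA⟩
      have hne : G' ≠ G := by
        intro hc
        subst hc
        have e1 := congrFun hgr u
        have e2 := congrFun hfr u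
        rw [e2] at e1
        have h1 : r u = !(r u) := e1.trans (by simp [hιdef, hu])
        simp at h1
      exact h G' hG' G hG hne ⟨v, hadj⟩
    -- injectivity of ι on S
    have hιinj : Set.InjOn ι S := by
      intro r hr t ht hrt
      rw [← hιι r hr, ← hιι t ht, hrt]
    have hcards : (S ∪ S.image ι).card = S.card + S.card := by
      rw [Finset.card_union_of_disjoint, Finset.card_image_of_injOn hιinj]
      rw [Finset.disjoint_right]
      intro a ha hA'
      obtain ⟨r, hr, rfl⟩ := mem_image.mp ha
      exact hdisj r hr hA'
    -- embed into functions on the complement of v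
    set ρ : (Fin n → Bool) → ({w : Fin n // w ≠ v} → Bool) :=
      fun r => fun w => r w.val with hρdef
    have hρinj : Set.InjOn ρ (↑(S ∪ S.image ι) : Set (Fin n → Bool)) := by
      intro r hr t ht hrt
      have hrv : r v = false := by
        rcases mem_union.mp (Finset.mem_coe.mp hr) with h' | h'
        · exact hSv r h'
        · obtain ⟨a, ha, rfl⟩ := mem_image.mp h'
          simp [hιdef]
      have htv : t v = false := by
        rcases mem_union.mp (Finset.mem_coe.mp ht) with h' | h'
        · exact hSv t h'
        · obtain ⟨a, ha, rfl⟩ := mem_image.mp h'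
          simp [hιdef]
      funext w
      by_cases hw : w = v
      · subst hw; rw [hrv, htv]
      · exact congrFun hrt ⟨w, hw⟩
    have hbig : (S ∪ S.image ι).card ≤ 2 ^ (n - 1) := by
      have h1 : ((S ∪ S.image ι).image ρ).card = (S ∪ S.image ι).card :=
        Finset.card_image_of_injOn hρinj
      have h2 : ((S ∪ S.image ι).image ρ).card ≤ Fintype.card ({w : Fin n // w ≠ v} → Bool) :=
        Finset.card_le_univ _
      have hcsub : Fintype.card {w : Fin n // w ≠ v} = n - 1 := by
        simpa using Fintype.card_subtype_compl (fun w : Fin n => w = v)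
      have h3 : Fintype.card ({w : Fin n // w ≠ v} → Bool) = 2 ^ (n - 1) := by
        rw [Fintype.card_fun, hcsub, Fintype.card_bool]
      omega
    have : S.card + S.card ≤ 2 ^ (n - 1) := by rw [← hcards]; exact hbig
    have hpow : 2 ^ (n - 1) = 2 ^ (n - 2) * 2 := by
      have : n - 1 = (n - 2) + 1 := by omega
      rw [this, pow_succ]
    omega
  calc 𝓜.card ^ 2 = A.card ^ 2 := by rw [hAcard]
    _ ≤ ∏ v, (A.image (fun f => f v)).card := shearer_aux n A hsymm hdiag
    _ ≤ ∏ _v : Fin n, 2 ^ (n - 2) := Finset.prod_le_prod' (fun v _ => key v)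
    _ = (2 ^ (n - 2)) ^ n := by rw [Finset.prod_const]; simp
    _ = 2 ^ (n * (n - 2)) := by rw [← pow_mul, Nat.mul_comm]

open Finset in
lemma part1_construction (n : ℕ) (hn : 3 ≤ n) (ho : Odd n) :
    ∃ 𝓜 : Finset (SimpleGraph (Fin n)),
        (∀ G ∈ 𝓜, ∀ G' ∈ 𝓜, G ≠ G' → ¬ HasSpanningStar (symmDiffG G G')) ∧
        𝓜.card = 2 ^ (n * (n - 1) / 2 - (n + 1) / 2) := by
  classical
  have hodd : n % 2 = 1 := Nat.odd_iff.mp ho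
  have hb : ∀ i ∈ Finset.range ((n - 1) / 2), 2 * i + 1 < n := by
    intro i hi
    have := Finset.mem_range.mp hi
    omega
  set F0 : Finset (Sym2 (Fin n)) :=
    (Finset.range ((n - 1) / 2)).attach.image
      (fun i => s((⟨2 * i.val, by have := hb i.val i.property; omega⟩ : Fin n),
                  (⟨2 * i.val + 1, hb i.val i.property⟩ : Fin n))) with hF0def
  set einf : Sym2 (Fin n) := s((⟨n - 1, by omega⟩ : Fin n), (⟨0, by omega⟩ : Fin n)) with heinfdef
  set F : Finset (Sym2 (Fin n)) := F0 ∪ {einf} with hFdef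
  have hF0card : F0.card = (n - 1) / 2 := by
    rw [hF0def, Finset.card_image_of_injOn, Finset.card_attach, Finset.card_range]
    intro i _ j _ hij
    rcases Sym2.eq_iff.mp hij with ⟨h1, _⟩ | ⟨h1, h2⟩
    · have e1 : 2 * i.val = 2 * j.val := congrArg Fin.val h1
      exact Subtype.ext (by omega)
    · have e1 : 2 * i.val = 2 * j.val + 1 := congrArg Fin.val h1
      omega
  have heinf : einf ∉ F0 := by
    rw [hF0def]
    intro hmem
    obtain ⟨i, _, hi⟩ := Finset.mem_image.mp hmem
    rcases Sym2.eq_iff.mp hi with ⟨h1, h2⟩ | ⟨h1, h2⟩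
    · have e1 : 2 * i.val = n - 1 := congrArg Fin.val h1
      have e2 : 2 * i.val + 1 = 0 := congrArg Fin.val h2
      omega
    · have e1 : 2 * i.val = 0 := congrArg Fin.val h1
      have e2 : 2 * i.val + 1 = n - 1 := congrArg Fin.val h2
      omega
  have hFcard : F.card = (n + 1) / 2 := by
    rw [hFdef, Finset.card_union_of_disjoint (Finset.disjoint_singleton_right.mpr heinf),
      hF0card, Finset.card_singleton]
    omega
  have hFnd : ∀ e ∈ F, ¬ e.IsDiag := by
    intro e he
    rcases Finset.mem_union.mp he with h' | h'
    · obtain ⟨i, _, rfl⟩ := Finset.mem_image.mp h'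
      rw [Sym2.mk_isDiag_iff]
      intro hc
      have e1 : 2 * i.val = 2 * i.val + 1 := congrArg Fin.val hc
      omega
    · rw [Finset.mem_singleton.mp h', heinfdef, Sym2.mk_isDiag_iff]
      intro hc
      have e1 : n - 1 = 0 := congrArg Fin.val hc
      omega
  have hcover : ∀ v : Fin n, ∃ w : Fin n, w ≠ v ∧ s(v, w) ∈ F := by
    intro v
    by_cases hv : v.val = n - 1
    · refine ⟨⟨0, by omega⟩, ?_, ?_⟩
      · intro hc
        have e1 : (0 : ℕ) = v.val := congrArg Fin.val hc
        omega
      · have hveq : v = (⟨n - 1, by omega⟩ : Fin n) := Fin.ext hv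
        rw [hveq]
        exact Finset.mem_union_right _ (Finset.mem_singleton.mpr rfl)
    · have hvlt : v.val < n - 1 := by have := v.isLt; omega
      by_cases hpar : v.val % 2 = 0
      · have hi : v.val / 2 ∈ Finset.range ((n - 1) / 2) := by
          rw [Finset.mem_range]; omega
        refine ⟨⟨v.val + 1, by omega⟩, ?_, ?_⟩
        · intro hc
          have e1 : v.val + 1 = v.val := congrArg Fin.val hc
          omega
        · refine Finset.mem_union_left _ (Finset.mem_image.mpr ⟨⟨v.val / 2, hi⟩,
            Finset.mem_attach _ _, ?_⟩)
          refine Sym2.eq_iff.mpr (Or.inl ⟨Fin.ext ?_, Fin.ext ?_⟩)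
          · show 2 * (v.val / 2) = v.val; omega
          · show 2 * (v.val / 2) + 1 = v.val + 1; omega
      · have hi : v.val / 2 ∈ Finset.range ((n - 1) / 2) := by
          rw [Finset.mem_range]; omega
        refine ⟨⟨v.val - 1, by omega⟩, ?_, ?_⟩
        · intro hc
          have e1 : v.val - 1 = v.val := congrArg Fin.val hc
          omega
        · refine Finset.mem_union_left _ (Finset.mem_image.mpr ⟨⟨v.val / 2, hi⟩,
            Finset.mem_attach _ _, ?_⟩)
          refine Sym2.eq_iff.mpr (Or.inr ⟨Fin.ext ?_, Fin.ext ?_⟩)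
          · show 2 * (v.val / 2) = v.val - 1; omega
          · show 2 * (v.val / 2) + 1 = v.val; omega
  set ND : Finset (Sym2 (Fin n)) := Finset.univ.filter (fun e : Sym2 (Fin n) => ¬ e.IsDiag)
    with hNDdef
  have hFND : F ⊆ ND := by
    intro e he
    rw [hNDdef, Finset.mem_filter]
    exact ⟨Finset.mem_univ _, hFnd e he⟩
  set Aset : Finset (Sym2 (Fin n)) := ND \ F with hAsetdef
  have hNDcard : ND.card = n * (n - 1) / 2 := by
    rw [hNDdef, ← Fintype.card_subtype]
    rw [Sym2.card_subtype_not_diag, Fintype.card_fin, Nat.choose_two_right]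
  have hAsetcard : Aset.card = n * (n - 1) / 2 - (n + 1) / 2 := by
    rw [hAsetdef, Finset.card_sdiff_of_subset hFND, hNDcard, hFcard]
  set 𝓜 : Finset (SimpleGraph (Fin n)) :=
    Aset.powerset.image
      (fun s : Finset (Sym2 (Fin n)) =>
        SimpleGraph.fromEdgeSet (↑s : Set (Sym2 (Fin n)))) with h𝓜def
  have hnodiag : ∀ s ∈ Aset.powerset, ∀ e ∈ s, ¬ Sym2.IsDiag e := by
    intro s hs e he
    have h1 := Finset.mem_powerset.mp hs he
    rw [hAsetdef, Finset.mem_sdiff, hNDdef, Finset.mem_filter] at h1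
    exact h1.1.2
  have hclean : ∀ s ∈ Aset.powerset, (↑s : Set (Sym2 (Fin n))) \ {e : Sym2 (Fin n) | e.IsDiag} = (↑s : Set (Sym2 (Fin n))) := by
    intro s hs
    ext e
    simp only [Set.mem_diff, Set.mem_setOf_eq, Finset.mem_coe, and_iff_left_iff_imp]
    exact fun he => hnodiag s hs e he
  have hinj : Set.InjOn (fun s : Finset (Sym2 (Fin n)) => SimpleGraph.fromEdgeSet (↑s : Set (Sym2 (Fin n))))
      (↑Aset.powerset : Set (Finset (Sym2 (Fin n)))) := by
    intro s hs t ht hst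
    have hs' := Finset.mem_coe.mp hs
    have ht' := Finset.mem_coe.mp ht
    have h1 := congrArg SimpleGraph.edgeSet hst
    rw [SimpleGraph.edgeSet_fromEdgeSet, SimpleGraph.edgeSet_fromEdgeSet,
      Sym2.diagSet_eq_setOfPred_isDiag, hclean s hs', hclean t ht'] at h1
    exact Finset.coe_injective h1
  refine ⟨𝓜, ?_, ?_⟩
  · intro G hG G' hG' _ hstar
    obtain ⟨v, hv⟩ := hstar
    obtain ⟨w, hwv, hwF⟩ := hcover v
    rw [h𝓜def] at hG hG'
    obtain ⟨s, hs, rfl⟩ := Finset.mem_image.mp hG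
    obtain ⟨t, ht, rfl⟩ := Finset.mem_image.mp hG'
    have hadj := hv w hwv
    have hnotF : ∀ u, u ∈ Aset.powerset → s(v, w) ∉ u := by
      intro u hu hmem
      have h1 := Finset.mem_powerset.mp hu hmem
      rw [hAsetdef, Finset.mem_sdiff] at h1
      exact h1.2 hwF
    rcases hadj with ⟨h1, _⟩ | ⟨h1, _⟩
    · rw [SimpleGraph.fromEdgeSet_adj] at h1
      exact hnotF s hs (Finset.mem_coe.mp h1.1)
    · rw [SimpleGraph.fromEdgeSet_adj] at h1
      exact hnotF t ht (Finset.mem_coe.mp h1.1)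
  · rw [h𝓜def, Finset.card_image_of_injOn hinj, Finset.card_powerset, hAsetcard]


theorem stmt_8 (n : ℕ) (hn : 3 ≤ n) (ho : Odd n) :
    (∃ 𝓜 : Finset (SimpleGraph (Fin n)),
        (∀ G ∈ 𝓜, ∀ G' ∈ 𝓜, G ≠ G' → ¬ HasSpanningStar (symmDiffG G G')) ∧
        𝓜.card = 2 ^ (n * (n - 1) / 2 - (n + 1) / 2)) ∧
    (∀ 𝓜 : Finset (SimpleGraph (Fin n)),
        (∀ G ∈ 𝓜, ∀ G' ∈ 𝓜, G ≠ G' → ¬ HasSpanningStar (symmDiffG G G')) →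
        𝓜.card ^ 2 ≤ 2 ^ (n * (n - 2))) := by
  exact ⟨part1_construction n hn ho, fun 𝓜 h => part2_bound n hn 𝓜 h⟩
end

section
/- Let ι be a type and for each i ∈ ι let L_i be a finite simple graph. Let n ≥ 1 and suppose H is a simple graph on the vertex set Fin n with exactly e edges that contains no copy of any L_i. If 𝓐 is a family of simple graphs on Fin n such that for any two distinct members G, G' ∈ 𝓐 the symmetric difference G ⊕ G' contains a copy of some L_i, then |𝓐| ≤ 2^(n(n−1)/2 − e). -/
open SimpleGraph Filter

/-- `G` contains a (not necessarily induced) copy of `L`: an injective map of the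
vertices of `L` into those of `G` mapping adjacent vertices to adjacent vertices. -/
def ContainsCopy {W V : Type*} (L : SimpleGraph W) (G : SimpleGraph V) : Prop :=
  ∃ f : W → V, Function.Injective f ∧ ∀ u v : W, L.Adj u v → G.Adj (f u) (f v)

theorem stmt_9 {ι : Type*} {W : ι → Type*} [∀ i, Fintype (W i)]
    (L : ∀ i, SimpleGraph (W i)) (n e : ℕ) (hn : 1 ≤ n)
    (H : SimpleGraph (Fin n)) (hHe : H.edgeSet.ncard = e)
    (hH : ∀ i, ¬ ContainsCopy (L i) H)
    (A : Finset (SimpleGraph (Fin n)))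
    (hA : ∀ G ∈ A, ∀ G' ∈ A, G ≠ G' → ∃ i, ContainsCopy (L i) (symmDiffG G G')) :
    A.card ≤ 2 ^ (n * (n - 1) / 2 - e) := by
  classical
  -- the map G ↦ E(G) \ E(H) is injective on A
  have hinj : Set.InjOn (fun G : SimpleGraph (Fin n) => G.edgeFinset \ H.edgeFinset) A := by
    intro G hG G' hG' heq
    by_contra hne
    obtain ⟨i, f, hf, hadj⟩ := hA G hG G' hG' hne
    apply hH i
    refine ⟨f, hf, fun u v huv => ?_⟩
    have h := hadj u v huv
    -- show symmDiffG G G' ≤ H using heq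
    by_contra hH'
    rcases h with ⟨h1, h2⟩ | ⟨h1, h2⟩
    · have : s(f u, f v) ∈ G.edgeFinset \ H.edgeFinset := by
        simp [SimpleGraph.mem_edgeFinset, h1, hH']
      rw [show G.edgeFinset \ H.edgeFinset = G'.edgeFinset \ H.edgeFinset from heq] at this
      simp [SimpleGraph.mem_edgeFinset] at this
      exact h2 this.1
    · have : s(f u, f v) ∈ G'.edgeFinset \ H.edgeFinset := by
        simp [SimpleGraph.mem_edgeFinset, h1, hH']
      rw [show G'.edgeFinset \ H.edgeFinset = G.edgeFinset \ H.edgeFinset from heq.symm] at this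
      simp [SimpleGraph.mem_edgeFinset] at this
      exact h2 this.1
  have hmaps : ∀ G ∈ A, G.edgeFinset \ H.edgeFinset ∈
      ((⊤ : SimpleGraph (Fin n)).edgeFinset \ H.edgeFinset).powerset := by
    intro G hG
    exact Finset.mem_powerset.mpr
      (Finset.sdiff_subset_sdiff (edgeFinset_subset_edgeFinset.mpr le_top) le_rfl)
  have hcard := Finset.card_le_card_of_injOn _ hmaps hinj
  have hHcard : H.edgeFinset.card = e := by
    rw [← hHe, Set.ncard_eq_toFinset_card']
    unfold SimpleGraph.edgeFinset
    convert rfl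
  have hsub : H.edgeFinset ⊆ (⊤ : SimpleGraph (Fin n)).edgeFinset :=
    edgeFinset_subset_edgeFinset.mpr le_top
  have htop : (⊤ : SimpleGraph (Fin n)).edgeFinset.card = n * (n - 1) / 2 := by
    rw [SimpleGraph.card_edgeFinset_top_eq_card_choose_two]
    simp [Nat.choose_two_right]
  calc A.card ≤ ((⊤ : SimpleGraph (Fin n)).edgeFinset \ H.edgeFinset).powerset.card := hcard
    _ = 2 ^ (n * (n - 1) / 2 - e) := by
        rw [Finset.card_powerset, Finset.card_sdiff_of_subset hsub, hHcard, htop]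
end

section
/- The maximum cardinality of a family 𝓖 of simple graphs on the vertex set Fin 5 such that for any two distinct members G, G' ∈ 𝓖 the symmetric difference G ⊕ G' contains a triangle (three mutually adjacent vertices) equals 16; that is, there exists such a family of cardinality 16, and every such family has cardinality at most 16. -/
open SimpleGraph Filter

/-- A graph contains a triangle: three pairwise adjacent vertices. -/
def ContainsTriangle {V : Type*} (G : SimpleGraph V) : Prop :=
  ∃ a b c : V, G.Adj a b ∧ G.Adj b c ∧ G.Adj a c

abbrev B4 := Bool × Bool × Bool × Bool

def gAdj (b : B4) (u v : Fin 5) : Bool :=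
  (b.1 && Nat.testBit 16409138 (5*u.val+v.val)) ^^
  ((b.2.1 && Nat.testBit 11077380 (5*u.val+v.val)) ^^
  ((b.2.2.1 && Nat.testBit 10135704 (5*u.val+v.val)) ^^
  (b.2.2.2 && Nat.testBit 7424912 (5*u.val+v.val))))

lemma gAdj_symm : ∀ (b : B4) (u v : Fin 5), gAdj b u v = gAdj b v u := by decide

lemma gAdj_irrefl : ∀ (b : B4) (u : Fin 5), gAdj b u u = false := by decide

lemma gAdj_tri : ∀ b b' : B4, b ≠ b' → ∃ x y z : Fin 5,
    gAdj b x y ≠ gAdj b' x y ∧ gAdj b y z ≠ gAdj b' y z ∧ gAdj b x z ≠ gAdj b' x z := by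
  decide

def myGraph (b : B4) : SimpleGraph (Fin 5) where
  Adj u v := gAdj b u v = true
  symm := ⟨fun u v h => (gAdj_symm b v u).trans h⟩
  loopless := ⟨fun u h => by simp [gAdj_irrefl b u] at h⟩

lemma bool_xor (p q : Bool) :
    ((p = true ∧ ¬ q = true) ∨ (q = true ∧ ¬ p = true)) ↔ p ≠ q := by
  revert p q; decide

lemma symdiff_adj (b b' : B4) (u v : Fin 5) :
    (symmDiffG (myGraph b) (myGraph b')).Adj u v ↔ gAdj b u v ≠ gAdj b' u v :=
  bool_xor (gAdj b u v) (gAdj b' u v)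

lemma no_tri {H : SimpleGraph (Fin 5)}
    (h01 : ¬H.Adj 0 1) (h23 : ¬H.Adj 2 3) (h24 : ¬H.Adj 2 4) (h34 : ¬H.Adj 3 4) :
    ¬ ContainsTriangle H := by
  rintro ⟨a, b, c, hab, hbc, hac⟩
  have h10 : ¬H.Adj 1 0 := fun h => h01 h.symm
  have h32 : ¬H.Adj 3 2 := fun h => h23 h.symm
  have h42 : ¬H.Adj 4 2 := fun h => h24 h.symm
  have h43 : ¬H.Adj 4 3 := fun h => h34 h.symm
  have hirr : ∀ u : Fin 5, ¬H.Adj u u := fun u => H.irrefl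
  fin_cases a <;> fin_cases b <;> fin_cases c <;>
    first
      | exact h01 hab | exact h01 hbc | exact h01 hac
      | exact h10 hab | exact h10 hbc | exact h10 hac
      | exact h23 hab | exact h23 hbc | exact h23 hac
      | exact h32 hab | exact h32 hbc | exact h32 hac
      | exact h24 hab | exact h24 hbc | exact h24 hac
      | exact h42 hab | exact h42 hbc | exact h42 hac
      | exact h34 hab | exact h34 hbc | exact h34 hac
      | exact h43 hab | exact h43 hbc | exact h43 hac
      | exact hirr _ hab | exact hirr _ hbc | exact hirr _ hac

lemma myGraph_inj : Function.Injective myGraph := by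
  intro b b' h
  by_contra hbb
  obtain ⟨x, y, z, h1, -, -⟩ := gAdj_tri b b' hbb
  have hadj : (gAdj b x y = true) = (gAdj b' x y = true) :=
    congrArg (fun G : SimpleGraph (Fin 5) => G.Adj x y) h
  apply h1
  cases hb : gAdj b x y <;> cases hb' : gAdj b' x y <;> simp_all

theorem stmt_13 :
    IsGreatest {m : ℕ | ∃ 𝓖 : Finset (SimpleGraph (Fin 5)),
        (∀ G ∈ 𝓖, ∀ G' ∈ 𝓖, G ≠ G' → ContainsTriangle (symmDiffG G G')) ∧ 𝓖.card = m}
      16 := by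
  classical
  constructor
  · -- existence of a family of size 16
    refine ⟨Finset.univ.image myGraph, ?_, ?_⟩
    · intro G hG G' hG' hne
      rcases Finset.mem_image.mp hG with ⟨b, -, rfl⟩
      rcases Finset.mem_image.mp hG' with ⟨b', -, rfl⟩
      have hbb : b ≠ b' := fun h => hne (by rw [h])
      obtain ⟨x, y, z, h1, h2, h3⟩ := gAdj_tri b b' hbb
      exact ⟨x, y, z, (symdiff_adj b b' x y).mpr h1,
        (symdiff_adj b b' y z).mpr h2, (symdiff_adj b b' x z).mpr h3⟩
    · rw [Finset.card_image_of_injective _ myGraph_inj, Finset.card_univ]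
      rfl
  · -- upper bound
    rintro m ⟨𝓖, htri, rfl⟩
    set f : SimpleGraph (Fin 5) → (Prop × Prop × Prop × Prop) :=
      fun G => (G.Adj 0 1, G.Adj 2 3, G.Adj 2 4, G.Adj 3 4) with hf
    have hinj : Set.InjOn f 𝓖 := by
      intro G hG G' hG' hfe
      by_contra hne
      obtain ⟨e1, e2, e3, e4⟩ : G.Adj 0 1 = G'.Adj 0 1 ∧ G.Adj 2 3 = G'.Adj 2 3 ∧
          G.Adj 2 4 = G'.Adj 2 4 ∧ G.Adj 3 4 = G'.Adj 3 4 := by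
        simpa [hf, Prod.ext_iff] using hfe
      have := htri G hG G' hG' hne
      refine no_tri ?_ ?_ ?_ ?_ this
      · rintro (⟨h1, h2⟩ | ⟨h1, h2⟩)
        · exact h2 (e1 ▸ h1)
        · exact h2 (e1 ▸ h1)
      · rintro (⟨h1, h2⟩ | ⟨h1, h2⟩)
        · exact h2 (e2 ▸ h1)
        · exact h2 (e2 ▸ h1)
      · rintro (⟨h1, h2⟩ | ⟨h1, h2⟩)
        · exact h2 (e3 ▸ h1)
        · exact h2 (e3 ▸ h1)
      · rintro (⟨h1, h2⟩ | ⟨h1, h2⟩)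
        · exact h2 (e4 ▸ h1)
        · exact h2 (e4 ▸ h1)
    calc 𝓖.card = (𝓖.image f).card := (Finset.card_image_of_injOn hinj).symm
      _ ≤ (Finset.univ : Finset (Prop × Prop × Prop × Prop)).card :=
          Finset.card_le_card (Finset.subset_univ _)
      _ = 16 := by simp [Finset.card_univ]
end

section
/- The maximum cardinality of a family 𝓖 of simple graphs on the vertex set Fin 7 such that for any two distinct members G, G' ∈ 𝓖 the symmetric difference G ⊕ G' contains a cycle of odd length equals 2^9 = 512; that is, there exists such a family of cardinality 512, and every such family has cardinality at most 512. -/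
open SimpleGraph Filter

/-- A graph contains a cycle of odd length. -/
def ContainsOddCycle {V : Type*} (G : SimpleGraph V) : Prop :=
  ∃ (v : V) (p : G.Walk v v), p.IsCycle ∧ Odd p.length

/-! ### Lower bound construction -/

/-- Bit position for the edge between `u` and `v`. -/
def epos (u v : Fin 7) : ℕ := min u.val v.val * 7 + max u.val v.val

lemma epos_comm (u v : Fin 7) : epos u v = epos v u := by
  unfold epos; rw [Nat.min_comm, Nat.max_comm]

/-- Graph on `Fin 7` from a bitmask of edges. -/
def Gr (w : ℕ) : SimpleGraph (Fin 7) where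
  Adj u v := u ≠ v ∧ w.testBit (epos u v) = true
  symm := by
    constructor
    intro u v ⟨h1, h2⟩
    exact ⟨h1.symm, by rwa [epos_comm]⟩
  loopless := ⟨fun u ⟨h, _⟩ => h rfl⟩

instance (w : ℕ) : DecidableRel (Gr w).Adj := fun u v =>
  inferInstanceAs (Decidable (u ≠ v ∧ w.testBit (epos u v) = true))

def gensL : List ℕ :=
  [2207646876226, 17247249444, 135796760, 25871394904, 2225028470822,
   2199259581992, 2207815443544, 25804028942, 2207782800932]

def cwAux : List ℕ → ℕ → ℕ → ℕ
  | [], _, _ => 0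
  | g :: gs, k, x => (if x.testBit k then g else 0) ^^^ cwAux gs (k+1) x

def cw (x : ℕ) : ℕ := cwAux gensL 0 x

lemma xor_rearrange (a b c d : ℕ) : (a ^^^ b) ^^^ (c ^^^ d) = (a ^^^ c) ^^^ (b ^^^ d) := by
  apply Nat.eq_of_testBit_eq
  intro i
  simp only [Nat.testBit_xor]
  cases a.testBit i <;> cases b.testBit i <;> cases c.testBit i <;> cases d.testBit i <;> rfl

lemma cwAux_linear (l : List ℕ) (k x y : ℕ) :
    cwAux l k (x ^^^ y) = cwAux l k x ^^^ cwAux l k y := by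
  induction l generalizing k with
  | nil => simp [cwAux]
  | cons g gs ih =>
    simp only [cwAux, ih, Nat.testBit_xor]
    rw [xor_rearrange]
    congr 1
    cases hx : x.testBit k <;> cases hy : y.testBit k <;> simp

lemma cw_linear (x y : ℕ) : cw (x ^^^ y) = cw x ^^^ cw y := cwAux_linear _ _ _ _

lemma Gr_adj (w : ℕ) (u v : Fin 7) :
    (Gr w).Adj u v ↔ u ≠ v ∧ w.testBit (epos u v) = true := Iff.rfl

lemma symmDiffG_Gr (a b : ℕ) : symmDiffG (Gr a) (Gr b) = Gr (a ^^^ b) := by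
  ext u v
  show ((Gr a).Adj u v ∧ ¬ (Gr b).Adj u v) ∨ ((Gr b).Adj u v ∧ ¬ (Gr a).Adj u v) ↔ _
  simp only [Gr_adj, Nat.testBit_xor]
  by_cases h : u = v
  · simp [h]
  · cases ha : a.testBit (epos u v) <;> cases hb : b.testBit (epos u v) <;> simp [h, ha, hb]

/-- A triangle yields an odd cycle. -/
lemma triangle_oddCycle {V : Type*} [DecidableEq V] (H : SimpleGraph V) {a b c : V}
    (hab : H.Adj a b) (hbc : H.Adj b c) (hca : H.Adj c a) : ContainsOddCycle H := by
  have hba := hab.ne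
  have hcb := hbc.ne
  have hac := hca.ne
  refine ⟨a, Walk.cons hab (Walk.cons hbc (Walk.cons hca Walk.nil)), ?_, 1, rfl⟩
  rw [SimpleGraph.Walk.isCycle_def]
  refine ⟨?_, by simp, ?_⟩
  · rw [SimpleGraph.Walk.isTrail_def]
    simp only [Walk.edges_cons, Walk.edges_nil]
    simp only [List.nodup_cons, List.nodup_nil, List.mem_cons, List.mem_singleton,
      List.not_mem_nil, Sym2.eq_iff]
    refine ⟨?_, ?_, by simp⟩ <;> tauto
  · simp only [Walk.support_cons, Walk.support_nil, List.tail_cons]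
    simp only [List.nodup_cons, List.nodup_nil, List.mem_cons, List.mem_singleton,
      List.not_mem_nil]
    tauto

theorem test : True := trivial


def W1 : ℕ := 2207646876226
def W2 : ℕ := 17247249444
def W3 : ℕ := 135796760

def w1walk : (Gr W1).Walk 0 0 :=
  Walk.cons (v := 1) (by decide) (Walk.cons (v := 2) (by decide) (Walk.cons (v := 3) (by decide) (Walk.cons (v := 4) (by decide) (Walk.cons (v := 5) (by decide) (Walk.cons (v := 6) (by decide) (Walk.cons (v := 0) (by decide) (Walk.nil)))))))

def w2walk : (Gr W2).Walk 0 0 :=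
  Walk.cons (v := 2) (by decide) (Walk.cons (v := 4) (by decide) (Walk.cons (v := 6) (by decide) (Walk.cons (v := 1) (by decide) (Walk.cons (v := 3) (by decide) (Walk.cons (v := 5) (by decide) (Walk.cons (v := 0) (by decide) (Walk.nil)))))))

def w3walk : (Gr W3).Walk 0 0 :=
  Walk.cons (v := 3) (by decide) (Walk.cons (v := 6) (by decide) (Walk.cons (v := 2) (by decide) (Walk.cons (v := 5) (by decide) (Walk.cons (v := 1) (by decide) (Walk.cons (v := 4) (by decide) (Walk.cons (v := 0) (by decide) (Walk.nil)))))))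

lemma ocW {W : ℕ} (p : (Gr W).Walk 0 0) (h1 : p.IsTrail) (h2 : p ≠ Walk.nil)
    (h3 : p.support.tail.Nodup) (h4 : Odd p.length) : ContainsOddCycle (Gr W) :=
  ⟨0, p, Walk.isCycle_def _ |>.mpr ⟨h1, h2, h3⟩, h4⟩

lemma oc1 : ContainsOddCycle (Gr W1) :=
  ocW w1walk (Walk.isTrail_def _ |>.mpr (by decide)) (by simp [w1walk]) (by decide) ⟨3, by rfl⟩
lemma oc2 : ContainsOddCycle (Gr W2) :=
  ocW w2walk (Walk.isTrail_def _ |>.mpr (by decide)) (by simp [w2walk]) (by decide) ⟨3, by rfl⟩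
lemma oc3 : ContainsOddCycle (Gr W3) :=
  ocW w3walk (Walk.isTrail_def _ |>.mpr (by decide)) (by simp [w3walk]) (by decide) ⟨3, by rfl⟩

set_option maxHeartbeats 4000000 in
set_option maxRecDepth 10000 in
lemma key : ∀ x : Fin 512, x.val ≠ 0 →
    (∃ a b c : Fin 7, (Gr (cw x.val)).Adj a b ∧ (Gr (cw x.val)).Adj b c ∧ (Gr (cw x.val)).Adj c a)
    ∨ cw x.val = W1 ∨ cw x.val = W2 ∨ cw x.val = W3 := by decide

lemma xor_lt_512 {i j : ℕ} (hi : i < 512) (hj : j < 512) : i ^^^ j < 512 := by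
  have : (512 : ℕ) = 2 ^ 9 := rfl
  rw [this] at *
  exact Nat.xor_lt_two_pow hi hj

noncomputable instance : DecidableEq (SimpleGraph (Fin 7)) := Classical.decEq _

noncomputable def fam : Finset (SimpleGraph (Fin 7)) :=
  Finset.univ.image (fun i : Fin 512 => Gr (cw i.val))

lemma fam_oddCycle (i j : Fin 512) (hij : i ≠ j) :
    ContainsOddCycle (symmDiffG (Gr (cw i.val)) (Gr (cw j.val))) := by
  rw [symmDiffG_Gr, ← cw_linear]
  set x : Fin 512 := ⟨i.val ^^^ j.val, xor_lt_512 i.isLt j.isLt⟩ with hx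
  have hx0 : x.val ≠ 0 := fun h => hij (Fin.ext (xor_eq_zero_iff.mp h))
  have := key x hx0
  rcases this with ⟨a, b, c, hab, hbc, hca⟩ | h1 | h2 | h3
  · exact triangle_oddCycle _ hab hbc hca
  · rw [show (i.val ^^^ j.val) = x.val from rfl, h1]; exact oc1
  · rw [show (i.val ^^^ j.val) = x.val from rfl, h2]; exact oc2
  · rw [show (i.val ^^^ j.val) = x.val from rfl, h3]; exact oc3

lemma oddCycle_has_edge {H : SimpleGraph (Fin 7)} (h : ContainsOddCycle H) :
    ∃ u v, H.Adj u v := by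
  obtain ⟨v, p, hc, _⟩ := h
  cases p with
  | nil => exact absurd rfl hc.ne_nil
  | cons h' p' => exact ⟨_, _, h'⟩

lemma fam_inj : Function.Injective (fun i : Fin 512 => Gr (cw i.val)) := by
  intro i j h
  by_contra hij
  have := fam_oddCycle i j hij
  have h' : Gr (cw i.val) = Gr (cw j.val) := h
  rw [h'] at this
  obtain ⟨u, v, huv⟩ := oddCycle_has_edge this
  rcases huv with ⟨h1, h2⟩ | ⟨h1, h2⟩ <;> exact h2 h1

lemma fam_card : fam.card = 512 := by
  rw [fam, Finset.card_image_of_injective _ fam_inj, Finset.card_univ, Fintype.card_fin]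

lemma mem_part : ∃ 𝓖 : Finset (SimpleGraph (Fin 7)),
    (∀ G ∈ 𝓖, ∀ G' ∈ 𝓖, G ≠ G' → ContainsOddCycle (symmDiffG G G')) ∧ 𝓖.card = 512 := by
  refine ⟨fam, ?_, fam_card⟩
  intro G hG G' hG' hne
  simp only [fam, Finset.mem_image, Finset.mem_univ, true_and] at hG hG'
  obtain ⟨i, rfl⟩ := hG
  obtain ⟨j, rfl⟩ := hG'
  exact fam_oddCycle i j (fun h => hne (by rw [h]))

/-! ### Upper bound -/

def L : Fin 9 → Fin 7 × Fin 7 :=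
  ![(0,1),(0,2),(1,2),(3,4),(3,5),(3,6),(4,5),(4,6),(5,6)]

lemma crossKey : ∀ u v : Fin 7, u ≠ v → ((u.val ≤ 2) ↔ (v.val ≤ 2)) →
    ∃ k : Fin 9, L k = (u, v) ∨ L k = (v, u) := by decide

def col (v : Fin 7) : ZMod 2 := if v.val ≤ 2 then 0 else 1

lemma col_eq_iff (u v : Fin 7) : col u = col v ↔ ((u.val ≤ 2) ↔ (v.val ≤ 2)) := by
  unfold col
  by_cases h1 : u.val ≤ 2 <;> by_cases h2 : v.val ≤ 2 <;> simp [h1, h2]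

lemma zmod2_step (a b : ZMod 2) (h : a ≠ b) : b = a + 1 := by revert h; revert a b; decide

lemma walk_parity {H : SimpleGraph (Fin 7)} (hcross : ∀ u v, H.Adj u v → col u ≠ col v)
    {u v : Fin 7} (p : H.Walk u v) : col v = col u + p.length := by
  induction p with
  | nil => simp
  | @cons a b c h q ih =>
    have h1 : col b = col a + 1 := zmod2_step _ _ (hcross a b h)
    rw [Walk.length_cons, ih, h1]
    push_cast
    ring

lemma upper (𝓖 : Finset (SimpleGraph (Fin 7)))
    (hP : ∀ G ∈ 𝓖, ∀ G' ∈ 𝓖, G ≠ G' → ContainsOddCycle (symmDiffG G G')) : 𝓖.card ≤ 512 := by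
  classical
  set φ : SimpleGraph (Fin 7) → (Fin 9 → Prop) := fun G k => G.Adj (L k).1 (L k).2 with hφ
  have hinj : Set.InjOn φ 𝓖 := by
    intro G hG G' hG' hEq
    by_contra hne
    obtain ⟨v, p, hc, hodd⟩ := hP G hG G' hG' hne
    have hiff : ∀ u v : Fin 7, u ≠ v → ((u.val ≤ 2) ↔ (v.val ≤ 2)) →
        (G.Adj u v ↔ G'.Adj u v) := by
      intro u v hne' hside
      obtain ⟨k, hk | hk⟩ := crossKey u v hne' hside
      · have h2 := congrFun hEq k
        simp only [hφ, hk] at h2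
        exact iff_of_eq h2
      · have h2 := congrFun hEq k
        simp only [hφ, hk] at h2
        rw [G.adj_comm, G'.adj_comm]
        exact iff_of_eq h2
    have hcross : ∀ u v, (symmDiffG G G').Adj u v → col u ≠ col v := by
      intro u v huv hcol
      have hne' : u ≠ v := by
        rcases huv with ⟨h1, _⟩ | ⟨h1, _⟩ <;> exact h1.ne
      have := hiff u v hne' ((col_eq_iff u v).mp hcol)
      rcases huv with ⟨h1, h2⟩ | ⟨h1, h2⟩
      · exact h2 (this.mp h1)
      · exact h2 (this.mpr h1)
    have hpar := walk_parity hcross p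
    have hlen : ((p.length : ZMod 2)) = 0 := (left_eq_add.mp hpar).symm ▸ rfl
    obtain ⟨t, ht⟩ := hodd
    rw [ht] at hlen
    push_cast at hlen
    rw [show ((2:ZMod 2)) = 0 from rfl] at hlen
    simp at hlen
  calc 𝓖.card = (𝓖.image φ).card := (Finset.card_image_of_injOn hinj).symm
    _ ≤ Fintype.card (Fin 9 → Prop) := Finset.card_le_univ _
    _ = 512 := by simp [Fintype.card_fun]

theorem stmt_15 :
    IsGreatest {m : ℕ | ∃ 𝓖 : Finset (SimpleGraph (Fin 7)),
        (∀ G ∈ 𝓖, ∀ G' ∈ 𝓖, G ≠ G' → ContainsOddCycle (symmDiffG G G')) ∧ 𝓖.card = m}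
      512 := by
  constructor
  · exact mem_part
  · rintro m ⟨𝓖, hP, rfl⟩
    exact upper 𝓖 hP
end

section
/- For every real δ with 0 < δ < 1/2 and every finite simple graph L with at least one edge, there exist a real ε > 0 and a natural number n₀ with the following property: let r = χ(L) be the chromatic number of L, and let G be a simple graph on a finite vertex set that is partitioned into r sets V_1, …, V_r, each an independent set of G, all of the same cardinality, which is at least n₀. If for all i ≠ j the pair (V_i, V_j) is ε-uniform in G and the edge density d(V_i, V_j) satisfies δ < d(V_i, V_j) < 1 − δ, then G contains an induced copy of L. -/
open SimpleGraph Filter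

/-- `G` contains an induced copy of `L`: an injective map of the vertices of `L`
into those of `G` such that images are adjacent iff the originals are. -/
def ContainsInducedCopy {W V : Type*} (L : SimpleGraph W) (G : SimpleGraph V) : Prop :=
  ∃ f : W → V, Function.Injective f ∧ ∀ u v : W, G.Adj (f u) (f v) ↔ L.Adj u v

open Finset

lemma card_interedges_sum {V : Type} [DecidableEq V] (G : SimpleGraph V) [DecidableRel G.Adj]
    (s t : Finset V) :
    (G.interedges s t).card = ∑ v ∈ s, (t.filter (G.Adj v)).card := by
  rw [SimpleGraph.interedges, Rel.interedges_eq_biUnion, card_biUnion]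
  · simp
  · intro x hx y hy hxy
    simp only [Finset.disjoint_left, Finset.mem_map, Function.Embedding.coeFn_mk, mem_filter]
    rintro ⟨a, b⟩ ⟨u, hu, huv⟩ ⟨u', hu', huv'⟩
    apply hxy
    rw [← huv] at huv'
    exact (Prod.mk.injEq _ _ _ _ ▸ huv'.symm).1

lemma edgeDensity_cast {V : Type} (G : SimpleGraph V) [DecidableRel G.Adj] (s t : Finset V) :
    (G.edgeDensity s t : ℝ) = ((G.interedges s t).card : ℝ) / ((s.card : ℝ) * t.card) := by
  rw [SimpleGraph.edgeDensity, Rel.edgeDensity, SimpleGraph.interedges]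
  push_cast
  ring

lemma few_bad_low {V : Type} [DecidableEq V] (G : SimpleGraph V) [DecidableRel G.Adj]
    {ε : ℝ} (hε : 0 < ε) {s t : Finset V} (hu : G.IsUniform ε s t) (hs : 0 < s.card)
    {B : Finset V} (hBt : B ⊆ t) (hB : (t.card : ℝ) * ε ≤ B.card) (hB0 : 0 < B.card)
    {Bad : Finset V} (hBad : Bad ⊆ s)
    (hdeg : ∀ v ∈ Bad, ((B.filter (G.Adj v)).card : ℝ) < ((G.edgeDensity s t : ℝ) - ε) * B.card) :
    (Bad.card : ℝ) < (s.card : ℝ) * ε := by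
  by_contra h
  push_neg at h
  have hBadpos : 0 < Bad.card := by
    have h0 : (0:ℝ) < (Bad.card : ℝ) :=
      lt_of_lt_of_le (by positivity) h
    exact_mod_cast h0
  have hne : Bad.Nonempty := card_pos.mp hBadpos
  have huni := hu hBad hBt h hB
  have hsum : ((G.interedges Bad B).card : ℝ) <
      (Bad.card : ℝ) * (((G.edgeDensity s t : ℝ) - ε) * B.card) := by
    rw [card_interedges_sum]
    push_cast
    calc ∑ v ∈ Bad, ((B.filter (G.Adj v)).card : ℝ)
        < ∑ _v ∈ Bad, (((G.edgeDensity s t : ℝ) - ε) * B.card) :=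
          Finset.sum_lt_sum_of_nonempty hne hdeg
      _ = _ := by rw [Finset.sum_const, nsmul_eq_mul]
  have hd : (G.edgeDensity Bad B : ℝ) < (G.edgeDensity s t : ℝ) - ε := by
    rw [edgeDensity_cast]
    rw [div_lt_iff₀ (mul_pos (by exact_mod_cast hBadpos : (0:ℝ) < (Bad.card : ℝ))
      (by exact_mod_cast hB0 : (0:ℝ) < (B.card : ℝ)))]
    exact hsum.trans_eq (by ring)
  have habs := abs_lt.mp huni
  linarith [habs.1]

lemma few_bad_high {V : Type} [DecidableEq V] (G : SimpleGraph V) [DecidableRel G.Adj]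
    {ε : ℝ} (hε : 0 < ε) {s t : Finset V} (hu : G.IsUniform ε s t) (hs : 0 < s.card)
    {B : Finset V} (hBt : B ⊆ t) (hB : (t.card : ℝ) * ε ≤ B.card) (hB0 : 0 < B.card)
    {Bad : Finset V} (hBad : Bad ⊆ s)
    (hdeg : ∀ v ∈ Bad, ((G.edgeDensity s t : ℝ) + ε) * B.card < ((B.filter (G.Adj v)).card : ℝ)) :
    (Bad.card : ℝ) < (s.card : ℝ) * ε := by
  by_contra h
  push_neg at h
  have hBadpos : 0 < Bad.card := by
    have h0 : (0:ℝ) < (Bad.card : ℝ) :=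
      lt_of_lt_of_le (by positivity) h
    exact_mod_cast h0
  have hne : Bad.Nonempty := card_pos.mp hBadpos
  have huni := hu hBad hBt h hB
  have hsum : (Bad.card : ℝ) * (((G.edgeDensity s t : ℝ) + ε) * B.card) <
      ((G.interedges Bad B).card : ℝ) := by
    rw [card_interedges_sum]
    push_cast
    calc ((Bad.card : ℝ)) * (((G.edgeDensity s t : ℝ) + ε) * B.card)
        = ∑ _v ∈ Bad, (((G.edgeDensity s t : ℝ) + ε) * B.card) := by
          rw [Finset.sum_const, nsmul_eq_mul]
      _ < ∑ v ∈ Bad, ((B.filter (G.Adj v)).card : ℝ) :=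
          Finset.sum_lt_sum_of_nonempty hne hdeg
  have hd : (G.edgeDensity s t : ℝ) + ε < (G.edgeDensity Bad B : ℝ) := by
    rw [edgeDensity_cast G Bad B]
    have hpos : (0:ℝ) < (Bad.card : ℝ) * (B.card : ℝ) :=
      mul_pos (by exact_mod_cast hBadpos) (by exact_mod_cast hB0)
    rw [lt_div_iff₀ hpos]
    exact lt_of_eq_of_lt (by ring) hsum
  have habs := abs_lt.mp huni
  linarith [habs.2]

set_option maxHeartbeats 1000000 in
theorem stmt_17 (δ : ℝ) (hδ0 : 0 < δ) (hδ1 : δ < 1 / 2)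
    {W : Type*} [Fintype W] (L : SimpleGraph W) (hL : ∃ u v : W, L.Adj u v)
    (r : ℕ) (hr : L.chromaticNumber = r) :
    ∃ ε : ℝ, 0 < ε ∧ ∃ n₀ : ℕ,
      ∀ (V : Type) [Fintype V] [DecidableEq V]
        (G : SimpleGraph V) [DecidableRel G.Adj] (P : Fin r → Finset V),
        (∀ i j, i ≠ j → Disjoint (P i) (P j)) →
        (∀ v : V, ∃ i, v ∈ P i) →
        (∀ i, ∀ u ∈ P i, ∀ v ∈ P i, ¬ G.Adj u v) →
        (∀ i j, (P i).card = (P j).card) →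
        (∀ i, n₀ ≤ (P i).card) →
        (∀ i j, i ≠ j → G.IsUniform ε (P i) (P j)) →
        (∀ i j, i ≠ j →
          δ < (G.edgeDensity (P i) (P j) : ℝ) ∧ (G.edgeDensity (P i) (P j) : ℝ) < 1 - δ) →
        ContainsInducedCopy L G := by
  classical
  obtain ⟨u₀, v₀, hu₀v₀⟩ := hL
  set m := Fintype.card W with hmdef
  have hm1 : 1 ≤ m := Fintype.card_pos_iff.mpr ⟨u₀⟩
  have hcol : L.Colorable r := by
    rw [← SimpleGraph.chromaticNumber_le_iff_colorable, hr]
  obtain ⟨C⟩ := hcol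
  have hδ2 : 0 < δ / 2 := by linarith
  set ε : ℝ := (δ/2)^m / (2*m+2) with hεdef
  have hε : 0 < ε := by positivity
  have hεle : ε ≤ δ / 2 := by
    have h1 : (δ/2)^m ≤ (δ/2)^1 :=
      pow_le_pow_of_le_one (le_of_lt hδ2) (by linarith) hm1
    rw [pow_one] at h1
    calc ε ≤ (δ/2)^m := by
          rw [hεdef]
          refine div_le_self (by positivity) ?_
          have hm0 : (0:ℝ) ≤ (m:ℝ) := Nat.cast_nonneg m
          linarith
      _ ≤ δ / 2 := h1
  have hkey : (2*(m:ℝ)+2) * ε = (δ/2)^m := by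
    rw [hεdef]
    field_simp
  refine ⟨ε, hε, ⟨⌈((m:ℝ)+1)/ε⌉₊ + 1, ?_⟩⟩
  intro V _ _ G _ P hdisj hcover hindep hcard hbig hunif hdens
  have e : W ≃ Fin m := Fintype.equivFin W
  set w : Fin m → W := fun i => e.symm i with hwdef
  set c : Fin m → Fin r := fun i => C (w i) with hcdef
  set n := (P (C u₀)).card with hndef
  have hncard : ∀ i, (P i).card = n := fun i => hcard i (C u₀)
  have hn0 : ((m:ℝ)+1) ≤ ε * n := by
    have h1 : ⌈((m:ℝ)+1)/ε⌉₊ + 1 ≤ n := by rw [hndef]; exact hbig (C u₀)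
    have h2 : ((m:ℝ)+1)/ε ≤ (n:ℝ) := by
      refine le_trans (Nat.le_ceil _) ?_
      exact_mod_cast le_trans (Nat.le_succ _) h1
    rw [div_le_iff₀ hε] at h2
    linarith [h2]
  have hεn : (0:ℝ) < ε * n := by
    have : (0:ℝ) < (m:ℝ) + 1 := by positivity
    linarith
  have hnpos : 0 < n := by
    by_contra h
    push_neg at h
    interval_cases n
    simp at hεn
  have hde2 : δ / 2 ≤ δ - ε := by linarith
  have hde0 : 0 < δ - ε := lt_of_lt_of_le hδ2 hde2
  have hde1 : δ - ε ≤ 1 := by linarith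
  have hpowm : ∀ k, k ≤ m → (2*(m:ℝ)+2) * ε ≤ (δ - ε)^k := by
    intro k hk
    rw [hkey]
    calc (δ/2)^m ≤ (δ-ε)^m := pow_le_pow_left₀ (le_of_lt hδ2) hde2 m
      _ ≤ (δ-ε)^k := pow_le_pow_of_le_one (le_of_lt hde0) hde1 hk
  have claim : ∀ k : ℕ, k ≤ m → ∃ f : Fin m → V, ∃ A : Fin m → Finset V,
      (∀ i : Fin m, (i:ℕ) < k → f i ∈ P (c i)) ∧
      (∀ i j : Fin m, (i:ℕ) < k → (j:ℕ) < k →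
        (G.Adj (f i) (f j) ↔ L.Adj (w i) (w j)) ∧ (f i = f j ↔ i = j)) ∧
      (∀ j : Fin m, k ≤ (j:ℕ) → A j ⊆ P (c j)) ∧
      (∀ j : Fin m, k ≤ (j:ℕ) → (δ-ε)^k * n - k ≤ ((A j).card : ℝ)) ∧
      (∀ i j : Fin m, (i:ℕ) < k → k ≤ (j:ℕ) → ∀ v ∈ A j,
        (G.Adj (f i) v ↔ L.Adj (w i) (w j)) ∧ f i ≠ v) := by
    intro k
    induction k with
    | zero =>
      intro _
      obtain ⟨vs, hvs⟩ : (P (C u₀)).Nonempty := Finset.card_pos.mp hnpos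
      refine ⟨fun _ => vs, fun j => P (c j), ?_, ?_, ?_, ?_, ?_⟩
      · intro i hi; omega
      · intro i j hi hj; omega
      · intro j _; exact Finset.Subset.rfl
      · intro j _
        rw [hncard (c j)]
        simp
      · intro i j hi; omega
    | succ k ih =>
      intro hk1
      have hkm : k ≤ m := Nat.le_of_succ_le hk1
      obtain ⟨f, A, inv1, inv2, inv3, inv4, inv5⟩ := ih hkm
      set K : Fin m := ⟨k, Nat.lt_of_succ_le hk1⟩ with hKdef
      have hKval : (K:ℕ) = k := rfl
      have hAlb : ∀ j : Fin m, k ≤ (j:ℕ) → (2*(m:ℝ)+2) * (ε*n) - m ≤ ((A j).card : ℝ) := by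
        intro j hj
        have h1 := inv4 j hj
        have h2 := hpowm k hkm
        have h3 : (2*(m:ℝ)+2)*(ε*n) ≤ (δ-ε)^k * n := by
          rw [← mul_assoc]
          exact mul_le_mul_of_nonneg_right h2 (Nat.cast_nonneg n)
        have h4 : (k:ℝ) ≤ m := Nat.cast_le.mpr hkm
        linarith
      have hAeps : ∀ j : Fin m, k ≤ (j:ℕ) → ε * n ≤ ((A j).card : ℝ) := by
        intro j hj
        have h1 := hAlb j hj
        have h4 : (1:ℝ) ≤ m := by exact_mod_cast hm1
        nlinarith [hn0, hεn]
      have hApos : ∀ j : Fin m, k ≤ (j:ℕ) → 0 < (A j).card := by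
        intro j hj
        have h1 := hAeps j hj
        have : (0:ℝ) < ((A j).card : ℝ) := lt_of_lt_of_le hεn h1
        exact_mod_cast this
      -- bad sets
      set bad : Fin m → Finset V := fun j => (A K).filter (fun v =>
        ¬ ((δ-ε) * ((A j).card : ℝ) ≤
          (((A j).filter (fun u => G.Adj v u ↔ L.Adj (w K) (w j))).card : ℝ))) with hbaddef
      set J : Finset (Fin m) := Finset.univ.filter (fun j : Fin m => k < (j:ℕ) ∧ c j ≠ c K)
        with hJdef
      have hscard : 0 < (P (c K)).card := by rw [hncard]; exact hnpos
      have hbadcard : ∀ j ∈ J, ((bad j).card : ℝ) < ε * n := by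
        intro j hj
        obtain ⟨hjk, hjc⟩ := (Finset.mem_filter.mp hj).2
        have hne : c K ≠ c j := fun h => hjc h.symm
        have hu := hunif (c K) (c j) hne
        have hd := hdens (c K) (c j) hne
        have hBt : A j ⊆ P (c j) := inv3 j (le_of_lt hjk)
        have hB : ((P (c j)).card : ℝ) * ε ≤ ((A j).card : ℝ) := by
          rw [hncard (c j), mul_comm]
          exact hAeps j (le_of_lt hjk)
        have hB0 : 0 < (A j).card := hApos j (le_of_lt hjk)
        have hBadsub : bad j ⊆ P (c K) :=
          (Finset.filter_subset _ _).trans (inv3 K le_rfl)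
        have hAjpos : (0:ℝ) < ((A j).card : ℝ) := by exact_mod_cast hB0
        have key : ((bad j).card : ℝ) < ((P (c K)).card : ℝ) * ε := by
          by_cases hadj : L.Adj (w K) (w j)
          · refine few_bad_low G hε hu hscard hBt hB hB0 hBadsub ?_
            intro v hv
            have hv2 := (Finset.mem_filter.mp hv).2
            have hfil : (A j).filter (fun u => G.Adj v u ↔ L.Adj (w K) (w j))
                = (A j).filter (fun u => G.Adj v u) := by
              apply Finset.filter_congr
              intro u _
              simp [hadj]
            rw [hfil] at hv2
            push_neg at hv2
            have hδd : δ - ε ≤ (G.edgeDensity (P (c K)) (P (c j)) : ℝ) - ε := by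
              linarith [hd.1]
            calc (((A j).filter (fun u => G.Adj v u)).card : ℝ)
                < (δ-ε) * ((A j).card : ℝ) := hv2
              _ ≤ ((G.edgeDensity (P (c K)) (P (c j)) : ℝ) - ε) * ((A j).card : ℝ) :=
                  mul_le_mul_of_nonneg_right hδd (le_of_lt hAjpos)
          · refine few_bad_high G hε hu hscard hBt hB hB0 hBadsub ?_
            intro v hv
            have hv2 := (Finset.mem_filter.mp hv).2
            have hfil : (A j).filter (fun u => G.Adj v u ↔ L.Adj (w K) (w j))
                = (A j).filter (fun u => ¬ G.Adj v u) := by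
              apply Finset.filter_congr
              intro u _
              simp [hadj]
            rw [hfil] at hv2
            push_neg at hv2
            have hsplit : (((A j).filter (fun u => G.Adj v u)).card : ℝ)
                + (((A j).filter (fun u => ¬ G.Adj v u)).card : ℝ) = ((A j).card : ℝ) := by
              exact_mod_cast congrArg (Nat.cast : ℕ → ℝ)
                (Finset.card_filter_add_card_filter_not (p := fun u => G.Adj v u))
            nlinarith [hd.2, hv2, hAjpos]
        rw [hncard (c K)] at key
        linarith [key]
      have hBcard : (((J.biUnion bad).card : ℝ)) ≤ (m:ℝ) * (ε*n) := by
        have h1 : (J.biUnion bad).card ≤ ∑ j ∈ J, (bad j).card := Finset.card_biUnion_le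
        have h2 : ((∑ j ∈ J, (bad j).card : ℕ) : ℝ) ≤ ∑ j ∈ J, (ε*n) := by
          push_cast
          exact Finset.sum_le_sum (fun j hj => le_of_lt (hbadcard j hj))
        have h3 : (∑ _j ∈ J, (ε*n)) = (J.card : ℝ) * (ε*n) := by
          rw [Finset.sum_const, nsmul_eq_mul]
        have h4 : (J.card : ℝ) ≤ (m:ℝ) := by
          have : J.card ≤ m := by
            calc J.card ≤ Finset.univ.card := Finset.card_filter_le _ _
              _ = m := by simp
          exact_mod_cast this
        calc ((J.biUnion bad).card : ℝ) ≤ ((∑ j ∈ J, (bad j).card : ℕ) : ℝ) := by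
              exact_mod_cast h1
          _ ≤ ∑ _j ∈ J, (ε*n) := h2
          _ = (J.card : ℝ) * (ε*n) := h3
          _ ≤ (m:ℝ) * (ε*n) := mul_le_mul_of_nonneg_right h4 (le_of_lt hεn)
      have hsel : (A K \ J.biUnion bad).Nonempty := by
        rw [← Finset.card_pos]
        have h1 : (A K).card ≤ (A K \ J.biUnion bad).card + (J.biUnion bad).card :=
          Finset.card_le_card_sdiff_add_card
        have h2 := hAlb K le_rfl
        have h3 : (1:ℝ) ≤ m := by exact_mod_cast hm1
        have h5 : (0:ℝ) < ((A K \ J.biUnion bad).card : ℝ) := by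
          have hc1 : ((A K).card : ℝ) ≤ ((A K \ J.biUnion bad).card : ℝ) + ((J.biUnion bad).card : ℝ) := by
            exact_mod_cast h1
          nlinarith [hn0, hBcard]
        exact_mod_cast h5
      obtain ⟨v, hv⟩ := hsel
      obtain ⟨hvA, hvB⟩ := Finset.mem_sdiff.mp hv
      have hgood : ∀ j : Fin m, k < (j:ℕ) →
          (δ-ε) * ((A j).card : ℝ) ≤
            (((A j).filter (fun u => G.Adj v u ↔ L.Adj (w K) (w j))).card : ℝ) := by
        intro j hj
        by_cases hc : c j = c K
        · have hfil : (A j).filter (fun u => G.Adj v u ↔ L.Adj (w K) (w j)) = A j := by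
            refine Finset.filter_true_of_mem ?_
            intro u hu
            have hGA : ¬ G.Adj v u := by
              have hu' : u ∈ P (c K) := by
                rw [← hc]; exact inv3 j (le_of_lt hj) hu
              exact hindep (c K) v (inv3 K le_rfl hvA) u hu'
            have hLA : ¬ L.Adj (w K) (w j) := by
              intro h
              exact C.valid h (by rw [show C (w K) = c K from rfl, show C (w j) = c j from rfl, hc])
            simp [hGA, hLA]
          rw [hfil]
          have h1 : (0:ℝ) ≤ ((A j).card : ℝ) := Nat.cast_nonneg _
          nlinarith [hde1]
        · have hjJ : j ∈ J := Finset.mem_filter.mpr ⟨Finset.mem_univ _, hj, hc⟩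
          have hnb : v ∉ bad j := fun h => hvB (Finset.mem_biUnion.mpr ⟨j, hjJ, h⟩)
          by_contra hng
          exact hnb (Finset.mem_filter.mpr ⟨hvA, hng⟩)
      set f' : Fin m → V := Function.update f K v with hf'def
      set A' : Fin m → Finset V := fun j =>
        ((A j).filter (fun u => G.Adj v u ↔ L.Adj (w K) (w j))) \ {v} with hA'def
      have hfK : f' K = v := Function.update_self K v f
      have hfold : ∀ i : Fin m, (i:ℕ) < k → f' i = f i := by
        intro i hi
        have : i ≠ K := by
          intro h
          rw [h] at hi
          exact absurd hi (lt_irrefl k)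
        exact Function.update_of_ne this v f
      have hA'subA : ∀ j, A' j ⊆ A j := by
        intro j
        exact Finset.sdiff_subset.trans (Finset.filter_subset _ _)
      refine ⟨f', A', ?_, ?_, ?_, ?_, ?_⟩
      · -- membership
        intro i hi
        rcases Nat.lt_succ_iff_lt_or_eq.mp hi with h | h
        · rw [hfold i h]; exact inv1 i h
        · have hiK : i = K := Fin.ext h
          rw [hiK, hfK]
          exact inv3 K le_rfl hvA
      · -- pairs
        intro i j hi hj
        rcases Nat.lt_succ_iff_lt_or_eq.mp hi with hik | hik <;>
          rcases Nat.lt_succ_iff_lt_or_eq.mp hj with hjk | hjk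
        · rw [hfold i hik, hfold j hjk]
          exact inv2 i j hik hjk
        · have hjK : j = K := Fin.ext hjk
          subst hjK
          rw [hfold i hik, hfK]
          obtain ⟨hadj, hne⟩ := inv5 i K hik le_rfl v hvA
          refine ⟨hadj, ?_⟩
          constructor
          · intro h; exact absurd h hne
          · intro h
            rw [h] at hik
            exact absurd hik (lt_irrefl k)
        · have hiK : i = K := Fin.ext hik
          subst hiK
          rw [hfold j hjk, hfK]
          obtain ⟨hadj, hne⟩ := inv5 j K hjk le_rfl v hvA
          constructor
          · rw [G.adj_comm, L.adj_comm]
            exact hadj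
          · constructor
            · intro h; exact absurd h.symm hne
            · intro h
              rw [← h] at hjk
              exact absurd hjk (lt_irrefl k)
        · have hiK : i = K := Fin.ext hik
          have hjK : j = K := Fin.ext hjk
          subst hiK; subst hjK
          refine ⟨⟨fun h => absurd h (G.loopless.irrefl _), fun h => absurd h (L.loopless.irrefl _)⟩, by simp⟩
      · -- subset
        intro j hj
        exact (hA'subA j).trans (inv3 j (le_of_lt (Nat.lt_of_succ_le hj)))
      · -- size
        intro j hj
        have hjk : k < (j:ℕ) := Nat.lt_of_succ_le hj
        have h1 := hgood j hjk
        have h2 : (((A j).filter (fun u => G.Adj v u ↔ L.Adj (w K) (w j))).card : ℝ)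
            ≤ ((A' j).card : ℝ) + 1 := by
          have := Finset.card_le_card_sdiff_add_card
            (s := (A j).filter (fun u => G.Adj v u ↔ L.Adj (w K) (w j))) (t := {v})
          have hs1 : ({v} : Finset V).card = 1 := Finset.card_singleton v
          rw [hs1] at this
          exact_mod_cast this
        have h3 := inv4 j (le_of_lt hjk)
        have h4 : (δ-ε)*((δ-ε)^k * n - k) ≤ (δ-ε) * ((A j).card : ℝ) :=
          mul_le_mul_of_nonneg_left h3 (le_of_lt hde0)
        have h5 : (δ-ε)^(k+1) = (δ-ε)^k * (δ-ε) := pow_succ _ _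
        have h6 : (0:ℝ) ≤ (k:ℝ) := Nat.cast_nonneg k
        push_cast
        nlinarith [hde1, hde0]
      · -- adjacency invariant
        intro i j hi hj u hu
        have hjk : k ≤ (j:ℕ) := le_of_lt (Nat.lt_of_succ_le hj)
        rcases Nat.lt_succ_iff_lt_or_eq.mp hi with hik | hik
        · rw [hfold i hik]
          exact inv5 i j hik hjk u (hA'subA j hu)
        · have hiK : i = K := Fin.ext hik
          subst hiK
          rw [hfK]
          obtain ⟨hufil, hunv⟩ := Finset.mem_sdiff.mp hu
          have hiff := (Finset.mem_filter.mp hufil).2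
          refine ⟨hiff, ?_⟩
          intro h
          exact hunv (Finset.mem_singleton.mpr h.symm)
  obtain ⟨f, A, _, inv2, _, _, _⟩ := claim m le_rfl
  refine ⟨fun u => f (e u), ?_, ?_⟩
  · intro a b hab
    have h := (inv2 (e a) (e b) (e a).isLt (e b).isLt).2.mp hab
    exact e.injective h
  · intro a b
    have h := (inv2 (e a) (e b) (e a).isLt (e b).isLt).1
    rw [h]
    rw [hwdef]
    simp
end
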